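/- arXiv:2602.21861 — 4 statements merged into one kernel-verified Lean document; each statement's English description precedes it below -/
import Mathlib

section
/- Let k be a field of characteristic ≠ 2 and let Q0, Q∞ be quadratic forms in five variables over k, with symmetric Gram matrices M0, M∞, such that det(M0 + x·M∞) ∈ k[x] is separable of degree 5 (i.e., X : Q0 = Q∞ = 0 is a smooth quartic del Pezzo surface in ℙ⁴). Then the following are equivalent: (a) there exists a field extension K/k with [K : k] ≤ 2 and a nonzero v ∈ K⁵ with Q0(v) = Q∞(v) = 0 (X has a quadratic point); (b) there exists (a, b) ∈ k² \ {(0,0)} and a 2-dimensional k-linear subspace W ⊆ k⁵ such that the quadratic form aQ0 + bQ∞ vanishes identically on W (some quadric Q_t of the pencil, t ∈ ℙ¹(k), contains a k-rational line). -/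
open Polynomial Matrix

set_option linter.unusedSectionVars false
set_option linter.unusedVariables false
set_option maxHeartbeats 1000000

section QPHelpers

variable {k : Type} [Field k]

private lemma qp_quad_expand {R : Type*} [CommRing R] (M : Matrix (Fin 5) (Fin 5) R)
    (x y : R) (s t : Fin 5 → R) :
    dotProduct (x • s + y • t) (M.mulVec (x • s + y • t))
      = x*x*(dotProduct s (M.mulVec s))
        + x*y*(dotProduct s (M.mulVec t) + dotProduct t (M.mulVec s))
        + y*y*(dotProduct t (M.mulVec t)) := by
  simp only [Matrix.mulVec_add, Matrix.mulVec_smul, add_dotProduct,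
    smul_dotProduct, dotProduct_add, dotProduct_smul, smul_eq_mul]
  ring

private lemma qp_quad_expand' {R : Type*} [CommRing R] (M : Matrix (Fin 5) (Fin 5) R)
    (y : R) (s t : Fin 5 → R) :
    dotProduct (s + y • t) (M.mulVec (s + y • t))
      = (dotProduct s (M.mulVec s))
        + y*(dotProduct s (M.mulVec t) + dotProduct t (M.mulVec s))
        + y*y*(dotProduct t (M.mulVec t)) := by
  have h := qp_quad_expand M 1 y s t
  simpa using h

private lemma qp_dot_map {K : Type} [Field K] (f : k →+* K) (M : Matrix (Fin 5) (Fin 5) k)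
    (s t : Fin 5 → k) :
    dotProduct (f ∘ s) ((M.map f).mulVec (f ∘ t))
      = f (dotProduct s (M.mulVec t)) := by
  rw [RingHom.map_dotProduct]
  congr 1
  funext i
  exact (RingHom.map_mulVec f M t i).symm

private lemma qp_dot_symm {R : Type*} [CommRing R] {M : Matrix (Fin 5) (Fin 5) R}
    (hM : M.IsSymm) (s t : Fin 5 → R) :
    dotProduct t (M.mulVec s) = dotProduct s (M.mulVec t) := by
  rw [Matrix.dotProduct_mulVec, ← Matrix.mulVec_transpose, hM, dotProduct_comm]

private lemma qp_dot_pencil {R : Type*} [CommRing R] (a b : R)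
    (M0 Minf : Matrix (Fin 5) (Fin 5) R) (s t : Fin 5 → R) :
    dotProduct s ((a • M0 + b • Minf).mulVec t)
      = a * dotProduct s (M0.mulVec t) + b * dotProduct s (Minf.mulVec t) := by
  simp [Matrix.add_mulVec, Matrix.smul_mulVec, dotProduct_add,
    dotProduct_smul, smul_eq_mul]

private lemma qp_map_pencil {K : Type} [Field K] (f : k →+* K) (a b : k)
    (M0 Minf : Matrix (Fin 5) (Fin 5) k) :
    (a • M0 + b • Minf).map f = f a • M0.map f + f b • Minf.map f := by
  ext i j
  simp [Matrix.map_apply, Matrix.add_apply, Matrix.smul_apply, smul_eq_mul, map_add,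
    _root_.map_mul]

private lemma qp_two_ne_zero (hchar : ringChar k ≠ 2) : (2 : k) ≠ 0 := by
  intro h2
  have hd : ringChar k ∣ 2 := (ringChar.spec k 2).mp (by exact_mod_cast h2)
  rcases (Nat.prime_two.eq_one_or_self_of_dvd _ hd) with h | h
  · have : ((1 : ℕ) : k) = 0 := (ringChar.spec k 1).mpr (h ▸ dvd_refl _)
    simp at this
  · exact hchar h

private lemma qp_range_pair {p q : Fin 5 → k} : Set.range ![p, q] = {p, q} := by
  ext x
  constructor
  · rintro ⟨i, rfl⟩
    fin_cases i <;> simp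
  · rintro (rfl | rfl)
    · exact ⟨0, rfl⟩
    · exact ⟨1, rfl⟩

/-- From an independent pair on which a fixed pencil member vanishes identically,
conclude (b). -/
private lemma qp_line_of_pair (M0 Minf : Matrix (Fin 5) (Fin 5) k) (a b : k)
    (hab : (a, b) ≠ (0, 0)) (p q : Fin 5 → k) (hLI : LinearIndependent k ![p, q])
    (hp : dotProduct p ((a • M0 + b • Minf).mulVec p) = 0)
    (hq : dotProduct q ((a • M0 + b • Minf).mulVec q) = 0)
    (hcross : dotProduct p ((a • M0 + b • Minf).mulVec q)
        + dotProduct q ((a • M0 + b • Minf).mulVec p) = 0) :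
    (∃ a b : k, (a, b) ≠ (0, 0) ∧
      ∃ W : Submodule k (Fin 5 → k), Module.finrank k W = 2 ∧
        ∀ v ∈ W, dotProduct v ((a • M0 + b • Minf).mulVec v) = 0) := by
  refine ⟨a, b, hab, Submodule.span k {p, q}, ?_, ?_⟩
  · have h := finrank_span_eq_card hLI
    rw [qp_range_pair] at h
    simpa using h
  · intro v hv
    obtain ⟨x, y, rfl⟩ := Submodule.mem_span_pair.mp hv
    rw [qp_quad_expand, hp, hq, hcross]
    ring

/-- A rational point on `X` yields conclusion (b). -/
private lemma qp_line_of_point (M0 Minf : Matrix (Fin 5) (Fin 5) k)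
    (hM0 : M0.IsSymm) (hMinf : Minf.IsSymm)
    (w : Fin 5 → k) (hw : w ≠ 0)
    (h0 : dotProduct w (M0.mulVec w) = 0)
    (hinf : dotProduct w (Minf.mulVec w) = 0) :
    (∃ a b : k, (a, b) ≠ (0, 0) ∧
      ∃ W : Submodule k (Fin 5 → k), Module.finrank k W = 2 ∧
        ∀ v ∈ W, dotProduct v ((a • M0 + b • Minf).mulVec v) = 0) := by
  classical
  -- find u orthogonal to w for both forms, outside span {w}
  obtain ⟨u, ⟨hu0, huinf⟩, husp⟩ : ∃ u,
      (dotProduct w (M0.mulVec u) = 0 ∧ dotProduct w (Minf.mulVec u) = 0)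
        ∧ u ∉ Submodule.span k {w} := by
    let L : (Fin 5 → k) →ₗ[k] k × k :=
      { toFun := fun u => (dotProduct w (M0.mulVec u), dotProduct w (Minf.mulVec u))
        map_add' := by
          intro u v
          simp [Matrix.mulVec_add, dotProduct_add, Prod.ext_iff]
        map_smul' := by
          intro c u
          simp [Matrix.mulVec_smul, dotProduct_smul, Prod.ext_iff, smul_eq_mul] }
    have hker : 3 ≤ Module.finrank k (LinearMap.ker L) := by
      have h1 := LinearMap.finrank_range_add_finrank_ker L
      have h2 : Module.finrank k (LinearMap.range L) ≤ 2 := by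
        have := Submodule.finrank_le (LinearMap.range L)
        rwa [show Module.finrank k (k × k) = 2 by
          rw [Module.finrank_prod, Module.finrank_self]] at this
      rw [Module.finrank_fin_fun] at h1
      omega
    by_contra hcon
    push_neg at hcon
    have hle : LinearMap.ker L ≤ Submodule.span k {w} := by
      intro u hu
      have := LinearMap.mem_ker.mp hu
      have h' : dotProduct w (M0.mulVec u) = 0
          ∧ dotProduct w (Minf.mulVec u) = 0 := by
        simpa [L, Prod.ext_iff] using this
      exact hcon u h'
    have := Submodule.finrank_mono hle
    rw [finrank_span_singleton hw] at this
    omega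
  have hLI : LinearIndependent k ![w, u] := by
    rw [LinearIndependent.pair_iff]
    intro s t hst
    by_cases ht : t = 0
    · subst ht
      refine ⟨?_, rfl⟩
      by_contra hs
      apply hw
      have : s • w = 0 := by simpa using hst
      have := smul_eq_zero.mp this
      tauto
    · exfalso
      apply husp
      have h1 : t • u = -(s • w) := by
        rw [eq_neg_iff_add_eq_zero, add_comm]
        exact hst
      have h2 : u = (-(t⁻¹ * s)) • w := by
        calc u = (t⁻¹ * t) • u := by rw [inv_mul_cancel₀ ht, one_smul]
        _ = t⁻¹ • (t • u) := by rw [smul_smul]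
        _ = t⁻¹ • (-(s • w)) := by rw [h1]
        _ = (-(t⁻¹ * s)) • w := by rw [smul_neg, smul_smul, neg_smul]
      rw [h2]
      exact Submodule.smul_mem _ _ (Submodule.mem_span_singleton_self w)
  -- cross terms vanish for every pencil member
  have hcross : ∀ a b : k,
      dotProduct w ((a • M0 + b • Minf).mulVec u)
        + dotProduct u ((a • M0 + b • Minf).mulVec w) = 0 := by
    intro a b
    have hsymm : (a • M0 + b • Minf).IsSymm := by
      unfold Matrix.IsSymm
      rw [Matrix.transpose_add, Matrix.transpose_smul, Matrix.transpose_smul, hM0, hMinf]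
    have e1 : dotProduct u (M0.mulVec w) = 0 := by
      rw [qp_dot_symm hM0]; exact hu0
    have e2 : dotProduct u (Minf.mulVec w) = 0 := by
      rw [qp_dot_symm hMinf]; exact huinf
    rw [qp_dot_pencil, qp_dot_pencil, hu0, huinf, e1, e2]
    ring
  by_cases hz : (dotProduct u (Minf.mulVec u), -(dotProduct u (M0.mulVec u)))
      = ((0 : k), (0 : k))
  · have hA0 : dotProduct u (Minf.mulVec u) = 0 := by
      have := congrArg Prod.fst hz; simpa using this
    have hB0 : dotProduct u (M0.mulVec u) = 0 := by
      have := congrArg Prod.snd hz; simpa using this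
    refine qp_line_of_pair M0 Minf 1 0 (by simp) w u hLI ?_ ?_ (hcross 1 0)
    · rw [qp_dot_pencil, h0, hinf]; ring
    · rw [qp_dot_pencil, hA0, hB0]; ring
  · refine qp_line_of_pair M0 Minf _ _ hz w u hLI ?_ ?_ (hcross _ _)
    · rw [qp_dot_pencil, h0, hinf]; ring
    · rw [qp_dot_pencil]; ring


/-- Given an independent pair spanning a line totally isotropic for `M`, find a point
isotropic for both `M` and `N` over an extension of degree at most 2. -/
private lemma qp_isotropic_pair (M N : Matrix (Fin 5) (Fin 5) k) (p q : Fin 5 → k)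
    (hLI : LinearIndependent k ![p, q])
    (hMp : dotProduct p (M.mulVec p) = 0)
    (hMq : dotProduct q (M.mulVec q) = 0)
    (hMpq : dotProduct p (M.mulVec q) + dotProduct q (M.mulVec p) = 0) :
    ∃ (K : Type) (_ : Field K) (_ : Algebra k K), FiniteDimensional k K ∧
      Module.finrank k K ≤ 2 ∧ ∃ v : Fin 5 → K, v ≠ 0 ∧
        dotProduct v ((M.map (algebraMap k K)).mulVec v) = 0 ∧
        dotProduct v ((N.map (algebraMap k K)).mulVec v) = 0 := by
  classical
  have hq0 : q ≠ 0 := by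
    rintro rfl
    have := (LinearIndependent.pair_iff.mp hLI 0 1 (by simp)).2
    exact one_ne_zero this
  have hmapk : ∀ (A : Matrix (Fin 5) (Fin 5) k), A.map (algebraMap k k) = A := by
    intro A
    have : algebraMap k k = RingHom.id k := Algebra.algebraMap_self
    rw [this]
    have h2 : (⇑(RingHom.id k) : k → k) = id := rfl
    rw [h2, Matrix.map_id]
  by_cases h1 : dotProduct q (N.mulVec q) = 0
  · refine ⟨k, inferInstance, inferInstance, inferInstance, by simp [Module.finrank_self], q,
      hq0, ?_, ?_⟩
    · rw [hmapk]; exact hMq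
    · rw [hmapk]; exact h1
  · set np := dotProduct p (N.mulVec p) with hnp
    set cr := dotProduct p (N.mulVec q) + dotProduct q (N.mulVec p) with hcr
    set nq := dotProduct q (N.mulVec q) with hnq
    by_cases h2 : ∃ c : k, np + cr * c + nq * (c * c) = 0
    · obtain ⟨c, hc⟩ := h2
      refine ⟨k, inferInstance, inferInstance, inferInstance, by simp [Module.finrank_self],
        p + c • q, ?_, ?_, ?_⟩
      · intro hpc
        have := (LinearIndependent.pair_iff.mp hLI 1 c (by rw [one_smul]; exact hpc)).1
        exact one_ne_zero this
      · rw [hmapk, qp_quad_expand', hMp, hMq, hMpq]; ring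
      · rw [hmapk, qp_quad_expand', ← hnp, ← hnq,
          show dotProduct p (N.mulVec q) + dotProduct q (N.mulVec p) = cr from rfl]
        linear_combination hc
    · -- no rational root: pass to a quadratic extension
      set P : k[X] := C nq * X ^ 2 + C cr * X + C np with hP
      have hPdeg : P.natDegree = 2 := Polynomial.natDegree_quadratic h1
      have hP0 : P ≠ 0 := fun h => by simp [h] at hPdeg
      have hPnu : ¬IsUnit P := Polynomial.not_isUnit_of_natDegree_pos P (by omega)
      obtain ⟨f, hmonic, hirr, hdvd⟩ := P.exists_monic_irreducible_factor hPnu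
      have hf0 : f ≠ 0 := hmonic.ne_zero
      haveI : Fact (Irreducible f) := ⟨hirr⟩
      set K := AdjoinRoot f
      haveI : FiniteDimensional k K :=
        Module.Finite.of_basis (AdjoinRoot.powerBasis hf0).basis
      have hfr : Module.finrank k K = f.natDegree := by
        rw [(AdjoinRoot.powerBasis hf0).finrank, AdjoinRoot.powerBasis_dim]
      have hfrle : Module.finrank k K ≤ 2 := by
        rw [hfr]
        calc f.natDegree ≤ P.natDegree := Polynomial.natDegree_le_of_dvd hdvd hP0
        _ = 2 := hPdeg
      set x0 : K := AdjoinRoot.root f with hx0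
      have hroot : Polynomial.aeval x0 P = 0 := by
        obtain ⟨g, hg⟩ := hdvd
        rw [hg, _root_.map_mul]
        have : Polynomial.aeval x0 f = 0 := by
          rw [hx0, AdjoinRoot.aeval_eq, AdjoinRoot.mk_self]
        rw [this, zero_mul]
      have hnoroot : ∀ c : k, P.eval c ≠ 0 := by
        intro c hc
        apply h2
        refine ⟨c, ?_⟩
        have : P.eval c = nq * c ^ 2 + cr * c + np := by
          simp [hP]
        rw [this] at hc
        linear_combination hc
      set alg := algebraMap k K with halg
      set v : Fin 5 → K := (alg ∘ p) + x0 • (alg ∘ q) with hv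
      have hvne : v ≠ 0 := by
        intro hv0
        obtain ⟨i, hqi⟩ := Function.ne_iff.mp hq0
        have hvi : alg (p i) + x0 * alg (q i) = 0 := by
          have := congrFun hv0 i
          simpa [hv, Pi.add_apply, Pi.smul_apply, Function.comp_apply, smul_eq_mul] using this
        have hqiK : alg (q i) ≠ 0 := by
          rw [halg]
          simpa using hqi
        have hstep : x0 * alg (q i) = alg (-(p i)) := by
          rw [map_neg]
          exact eq_neg_of_add_eq_zero_right hvi
        have hx0eq : x0 = alg (-(p i) / q i) := by
          rw [map_div₀, map_neg, eq_div_iff hqiK, ← map_neg]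
          exact hstep
        have hPev : alg (P.eval (-(p i) / q i)) = 0 := by
          rw [halg, ← Polynomial.aeval_algebraMap_apply_eq_algebraMap_eval, ← halg, ← hx0eq]
          exact hroot
        have : P.eval (-(p i) / q i) = 0 := by
          apply (algebraMap k K).injective
          rw [map_zero]
          exact hPev
        exact hnoroot _ this
      refine ⟨K, inferInstance, inferInstance, inferInstance, hfrle, v, hvne, ?_, ?_⟩
      · rw [hv, qp_quad_expand', qp_dot_map, qp_dot_map, qp_dot_map, qp_dot_map,
          hMp, hMq, ← map_add, hMpq]
        simp
      · rw [hv, qp_quad_expand', qp_dot_map, qp_dot_map, qp_dot_map, qp_dot_map,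
          ← map_add, ← hnp, ← hnq, ← hcr]
        have hr2 : alg nq * (x0 * x0) + alg cr * x0 + alg np = 0 := by
          have hh := hroot
          rw [hP] at hh
          simp only [map_add, _root_.map_mul, Polynomial.aeval_C, Polynomial.aeval_X,
            Polynomial.aeval_X_pow, pow_two] at hh
          rw [halg]
          linear_combination hh
        linear_combination hr2

private lemma qp_quadratic_structure (K : Type) [Field K] [Algebra k K] [FiniteDimensional k K]
    (hfr : Module.finrank k K = 2) (hchar2 : (2 : k) ≠ 0) :
    ∃ (α : K) (d : k), d ≠ 0 ∧ α ∉ Submodule.span k {(1 : K)}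
      ∧ α * α = algebraMap k K d ∧ Submodule.span k ({(1 : K), α} : Set K) = ⊤ := by
  classical
  -- find β outside the base field
  obtain ⟨β, hβ⟩ : ∃ β : K, β ∉ Submodule.span k {(1 : K)} := by
    by_contra hcon
    push_neg at hcon
    have htop : Submodule.span k {(1 : K)} = ⊤ := Submodule.eq_top_iff'.mpr hcon
    have h1 : Module.finrank k (Submodule.span k {(1 : K)}) = 1 :=
      finrank_span_singleton one_ne_zero
    rw [htop, finrank_top] at h1
    omega
  have hli : LinearIndependent k ![(1 : K), β] := by
    rw [LinearIndependent.pair_iff]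
    intro s t hst
    by_cases ht : t = 0
    · subst ht
      constructor
      · have : s • (1 : K) = 0 := by simpa using hst
        rcases smul_eq_zero.mp this with h | h
        · exact h
        · exact absurd h one_ne_zero
      · rfl
    · exfalso
      apply hβ
      have h1 : t • β = -(s • (1 : K)) := by
        rw [eq_neg_iff_add_eq_zero, add_comm]
        exact hst
      have h2 : β = (-(t⁻¹ * s)) • (1 : K) := by
        calc β = (t⁻¹ * t) • β := by rw [inv_mul_cancel₀ ht, one_smul]
        _ = t⁻¹ • (t • β) := by rw [smul_smul]
        _ = t⁻¹ • (-(s • (1 : K))) := by rw [h1]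
        _ = (-(t⁻¹ * s)) • (1 : K) := by rw [smul_neg, smul_smul, neg_smul]
      rw [h2]
      exact Submodule.smul_mem _ _ (Submodule.mem_span_singleton_self (1 : K))
  have hrange : Set.range ![(1 : K), β] = {(1 : K), β} := by
    ext x
    constructor
    · rintro ⟨i, rfl⟩
      fin_cases i <;> simp
    · rintro (rfl | rfl)
      · exact ⟨0, rfl⟩
      · exact ⟨1, rfl⟩
  have hspan : Submodule.span k ({(1 : K), β} : Set K) = ⊤ := by
    apply Submodule.eq_top_of_finrank_eq
    have h := finrank_span_eq_card hli
    rw [hrange] at h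
    rw [h, hfr]
    simp
  obtain ⟨s, r, hb2⟩ : ∃ s r : k, s • (1 : K) + r • β = β * β := by
    have : β * β ∈ Submodule.span k ({(1 : K), β} : Set K) := by rw [hspan]; trivial
    exact Submodule.mem_span_pair.mp this
  set c : k := r / 2 with hc
  have hrc : 2 * c = r := by
    rw [hc, mul_comm, div_mul_cancel₀ _ hchar2]
  set α : K := β - algebraMap k K c with hα
  have halgsmul : ∀ x : k, algebraMap k K x = x • (1 : K) := fun x =>
    Algebra.algebraMap_eq_smul_one x
  have hαspan : α ∉ Submodule.span k {(1 : K)} := by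
    intro hmem
    apply hβ
    have : β = α + c • (1 : K) := by rw [hα, ← halgsmul]; ring
    rw [this]
    exact Submodule.add_mem _ hmem
      (Submodule.smul_mem _ _ (Submodule.mem_span_singleton_self (1 : K)))
  have hα0 : α ≠ 0 := fun h => hαspan (h ▸ Submodule.zero_mem _)
  have hb2' : algebraMap k K s + algebraMap k K r * β = β * β := by
    rw [halgsmul s, halgsmul r, smul_mul_assoc, one_mul]
    exact hb2
  have halgr : algebraMap k K r = 2 * algebraMap k K c := by
    rw [← hrc, _root_.map_mul, map_ofNat]
  have hαsq : α * α = algebraMap k K (s + c * c) := by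
    rw [hα, map_add, _root_.map_mul]
    linear_combination (-1 : K) * hb2' + β * halgr
  refine ⟨α, s + c * c, ?_, hαspan, hαsq, ?_⟩
  · intro hd
    rw [hd, map_zero] at hαsq
    exact hα0 (mul_self_eq_zero.mp hαsq)
  · rw [eq_top_iff, ← hspan]
    apply Submodule.span_le.mpr
    intro x hx
    have hβmem : β ∈ Submodule.span k ({(1 : K), α} : Set K) := by
      have hβeq : β = α + c • (1 : K) := by rw [hα, ← halgsmul]; ring
      rw [hβeq]
      exact Submodule.add_mem _
        (Submodule.subset_span (Set.mem_insert_of_mem _ rfl))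
        (Submodule.smul_mem _ _ (Submodule.subset_span (Set.mem_insert _ _)))
    rcases hx with rfl | hx
    · exact Submodule.subset_span (Set.mem_insert _ _)
    · rw [Set.mem_singleton_iff] at hx
      rw [hx]
      exact hβmem


/-- The quadratic-extension case of (a) ⇒ (b). -/
private lemma qp_quadratic_case (M0 Minf : Matrix (Fin 5) (Fin 5) k)
    (hM0 : M0.IsSymm) (hMinf : Minf.IsSymm) (hchar2 : (2 : k) ≠ 0)
    (K : Type) [Field K] [Algebra k K] [FiniteDimensional k K]
    (hfr : Module.finrank k K = 2) (v : Fin 5 → K) (hv0 : v ≠ 0)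
    (hv1 : dotProduct v ((M0.map (algebraMap k K)).mulVec v) = 0)
    (hv2 : dotProduct v ((Minf.map (algebraMap k K)).mulVec v) = 0) :
    (∃ a b : k, (a, b) ≠ (0, 0) ∧
      ∃ W : Submodule k (Fin 5 → k), Module.finrank k W = 2 ∧
        ∀ v ∈ W, dotProduct v ((a • M0 + b • Minf).mulVec v) = 0) := by
  classical
  obtain ⟨α, d, hd0, hαspan, hαsq, hspanα⟩ := qp_quadratic_structure K hfr hchar2
  have hext : ∀ A B : k, algebraMap k K A + algebraMap k K B * α = 0 → A = 0 ∧ B = 0 := by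
    intro A B hAB
    by_cases hB : B = 0
    · subst hB
      refine ⟨?_, rfl⟩
      apply (algebraMap k K).injective
      rw [map_zero]
      simpa using hAB
    · exfalso
      apply hαspan
      have hBK : algebraMap k K B ≠ 0 := by simpa using hB
      have hαeq : α = algebraMap k K (-(A / B)) := by
        rw [map_neg, map_div₀, eq_neg_iff_add_eq_zero]
        field_simp
        linear_combination hAB
      rw [hαeq, Algebra.algebraMap_eq_smul_one]
      exact Submodule.smul_mem _ _ (Submodule.mem_span_singleton_self (1 : K))
  have hdec : ∀ i : Fin 5, ∃ xy : k × k,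
      algebraMap k K xy.1 + algebraMap k K xy.2 * α = v i := by
    intro i
    have hm : v i ∈ Submodule.span k ({(1 : K), α} : Set K) := by rw [hspanα]; trivial
    obtain ⟨x, y, hxy⟩ := Submodule.mem_span_pair.mp hm
    refine ⟨(x, y), ?_⟩
    rw [Algebra.algebraMap_eq_smul_one, ← Algebra.smul_def]
    exact hxy
  choose vc hvc using hdec
  set v₁ : Fin 5 → k := fun i => (vc i).1 with hv₁def
  set v₂ : Fin 5 → k := fun i => (vc i).2 with hv₂def
  have hvdec : v = (⇑(algebraMap k K) ∘ v₁) + α • (⇑(algebraMap k K) ∘ v₂) := by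
    funext i
    have h := hvc i
    simp only [Pi.add_apply, Pi.smul_apply, Function.comp_apply, smul_eq_mul]
    rw [← h]
    ring
  have key : ∀ M : Matrix (Fin 5) (Fin 5) k,
      dotProduct v ((M.map (algebraMap k K)).mulVec v) = 0 →
      (dotProduct v₁ (M.mulVec v₁) + d * dotProduct v₂ (M.mulVec v₂) = 0 ∧
       dotProduct v₁ (M.mulVec v₂) + dotProduct v₂ (M.mulVec v₁) = 0) := by
    intro M hM
    rw [hvdec, qp_quad_expand', qp_dot_map, qp_dot_map, qp_dot_map, qp_dot_map,
      ← map_add] at hM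
    apply hext
    rw [map_add, _root_.map_mul]
    linear_combination hM - (algebraMap k K (dotProduct v₂ (M.mulVec v₂))) * hαsq
  obtain ⟨E0, F0⟩ := key M0 hv1
  obtain ⟨Einf, Finf⟩ := key Minf hv2
  have hz : ¬(v₁ = 0 ∧ v₂ = 0) := by
    rintro ⟨h1, h2⟩
    apply hv0
    rw [hvdec, h1, h2]
    funext i
    simp
  by_cases hind : LinearIndependent k ![v₁, v₂]
  · by_cases hz2 : (dotProduct v₂ (Minf.mulVec v₂),
        -(dotProduct v₂ (M0.mulVec v₂))) = ((0 : k), (0 : k))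
    · have hA0 : dotProduct v₂ (Minf.mulVec v₂) = 0 := by
        have := congrArg Prod.fst hz2; simpa using this
      have hB0 : dotProduct v₂ (M0.mulVec v₂) = 0 := by
        have := congrArg Prod.snd hz2; simpa using this
      refine qp_line_of_pair M0 Minf 1 0 (by simp) v₁ v₂ hind ?_ ?_ ?_
      · rw [qp_dot_pencil]
        linear_combination E0 - d * hB0
      · rw [qp_dot_pencil]
        linear_combination hB0
      · rw [qp_dot_pencil, qp_dot_pencil]
        linear_combination F0
    · refine qp_line_of_pair M0 Minf _ _ hz2 v₁ v₂ hind ?_ ?_ ?_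
      · rw [qp_dot_pencil]
        linear_combination (dotProduct v₂ (Minf.mulVec v₂)) * E0
          - (dotProduct v₂ (M0.mulVec v₂)) * Einf
      · rw [qp_dot_pencil]
        ring
      · rw [qp_dot_pencil, qp_dot_pencil]
        linear_combination (dotProduct v₂ (Minf.mulVec v₂)) * F0
          - (dotProduct v₂ (M0.mulVec v₂)) * Finf
  · by_cases hv₂0 : v₂ = 0
    · have hv₁0 : v₁ ≠ 0 := fun h => hz ⟨h, hv₂0⟩
      have hQ0 : dotProduct v₁ (M0.mulVec v₁) = 0 := by
        have := E0
        rw [hv₂0] at this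
        simpa using this
      have hQinf : dotProduct v₁ (Minf.mulVec v₁) = 0 := by
        have := Einf
        rw [hv₂0] at this
        simpa using this
      exact qp_line_of_point M0 Minf hM0 hMinf v₁ hv₁0 hQ0 hQinf
    · rw [LinearIndependent.pair_iff] at hind
      push_neg at hind
      obtain ⟨s, t, hst, hstne⟩ := hind
      by_cases hs : s = 0
      · exfalso
        subst hs
        have ht : t ≠ 0 := hstne rfl
        have : t • v₂ = 0 := by simpa using hst
        rcases smul_eq_zero.mp this with h | h
        · exact ht h
        · exact hv₂0 h
      · have he : v₁ = (-(s⁻¹ * t)) • v₂ := by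
          have h1 : s • v₁ = -(t • v₂) := by
            rw [eq_neg_iff_add_eq_zero]
            exact hst
          calc v₁ = (s⁻¹ * s) • v₁ := by rw [inv_mul_cancel₀ hs, one_smul]
          _ = s⁻¹ • (s • v₁) := by rw [smul_smul]
          _ = s⁻¹ • (-(t • v₂)) := by rw [h1]
          _ = (-(s⁻¹ * t)) • v₂ := by rw [smul_neg, smul_smul, neg_smul]
        set e : k := -(s⁻¹ * t) with hedef
        have hkey : ∀ M : Matrix (Fin 5) (Fin 5) k,
            dotProduct v₁ (M.mulVec v₁) + d * dotProduct v₂ (M.mulVec v₂) = 0 →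
            dotProduct v₁ (M.mulVec v₂) + dotProduct v₂ (M.mulVec v₁) = 0 →
            dotProduct v₂ (M.mulVec v₂) = 0 := by
          intro M hE hF
          by_contra hne
          rw [he] at hE hF
          simp only [smul_dotProduct, Matrix.mulVec_smul, dotProduct_smul,
            smul_eq_mul] at hE hF
          have h2e : (2 * e) * dotProduct v₂ (M.mulVec v₂) = 0 := by
            linear_combination hF
          have he0 : e = 0 := by
            rcases mul_eq_zero.mp h2e with h | h
            · rcases mul_eq_zero.mp h with h' | h'
              · exact absurd h' hchar2
              · exact h'
            · exact absurd h hne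
          have hEd : d * dotProduct v₂ (M.mulVec v₂) = 0 := by
            rw [he0] at hE
            linear_combination hE
          rcases mul_eq_zero.mp hEd with h | h
          · exact hd0 h
          · exact hne h
        exact qp_line_of_point M0 Minf hM0 hMinf v₂ hv₂0
          (hkey M0 E0 F0) (hkey Minf Einf Finf)


end QPHelpers

theorem quadratic_point_iff_rational_line_in_pencil
    (k : Type) [Field k] (hchar : ringChar k ≠ 2)
    (M0 Minf : Matrix (Fin 5) (Fin 5) k) (hM0 : M0.IsSymm) (hMinf : Minf.IsSymm)
    (hsep : (((M0.map (C : k →+* Polynomial k))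
        + (X : Polynomial k) • (Minf.map C)).det).Separable)
    (hdeg : (((M0.map (C : k →+* Polynomial k))
        + (X : Polynomial k) • (Minf.map C)).det).degree = 5) :
    -- (a) X has a quadratic point
    (∃ (K : Type) (_ : Field K) (_ : Algebra k K), FiniteDimensional k K ∧
        Module.finrank k K ≤ 2 ∧
        ∃ v : Fin 5 → K, v ≠ 0 ∧
          dotProduct v ((M0.map (algebraMap k K)).mulVec v) = 0 ∧
          dotProduct v ((Minf.map (algebraMap k K)).mulVec v) = 0)
    ↔
    -- (b) some quadric in the pencil contains a k-rational line
    (∃ a b : k, (a, b) ≠ (0, 0) ∧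
      ∃ W : Submodule k (Fin 5 → k), Module.finrank k W = 2 ∧
        ∀ v ∈ W, dotProduct v ((a • M0 + b • Minf).mulVec v) = 0) := by
  classical
  have hchar2 : (2 : k) ≠ 0 := qp_two_ne_zero hchar
  constructor
  · rintro ⟨K, fK, aK, hFD, hle, v, hv0, hv1, hv2⟩
    letI := fK
    letI := aK
    haveI := hFD
    have hpos : 0 < Module.finrank k K := Module.finrank_pos
    have h12 : Module.finrank k K = 1 ∨ Module.finrank k K = 2 := by omega
    rcases h12 with hfr1 | hfr2
    · -- rational point case
      have hsp : Submodule.span k ({(1 : K)} : Set K) = ⊤ := by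
        apply Submodule.eq_top_of_finrank_eq
        rw [finrank_span_singleton (one_ne_zero : (1 : K) ≠ 0), hfr1]
      have hdec : ∀ i : Fin 5, ∃ c : k, algebraMap k K c = v i := by
        intro i
        have hm : v i ∈ Submodule.span k ({(1 : K)} : Set K) := by rw [hsp]; trivial
        obtain ⟨c, hc⟩ := Submodule.mem_span_singleton.mp hm
        exact ⟨c, by rw [Algebra.algebraMap_eq_smul_one]; exact hc⟩
      choose w hw using hdec
      have hcomp : ⇑(algebraMap k K) ∘ w = v := funext hw
      have hwne : w ≠ 0 := by
        intro h
        apply hv0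
        rw [← hcomp, h]
        funext i
        simp
      have h0 : dotProduct w (M0.mulVec w) = 0 := by
        apply (algebraMap k K).injective
        rw [map_zero, ← qp_dot_map, hcomp]
        exact hv1
      have hinf : dotProduct w (Minf.mulVec w) = 0 := by
        apply (algebraMap k K).injective
        rw [map_zero, ← qp_dot_map, hcomp]
        exact hv2
      exact qp_line_of_point M0 Minf hM0 hMinf w hwne h0 hinf
    · exact qp_quadratic_case M0 Minf hM0 hMinf hchar2 K hfr2 v hv0 hv1 hv2
  · rintro ⟨a, b, hab, W, hW2, hWiso⟩
    -- extract an independent pair from W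
    haveI : FiniteDimensional k W := inferInstance
    let bW := Module.finBasisOfFinrankEq k W hW2
    set p : Fin 5 → k := (bW 0 : Fin 5 → k) with hpdef
    set q : Fin 5 → k := (bW 1 : Fin 5 → k) with hqdef
    have hpW : p ∈ W := (bW 0).2
    have hqW : q ∈ W := (bW 1).2
    have hpairW : LinearIndependent k ![bW 0, bW 1] := by
      have hfun : ![bW 0, bW 1] = (fun i : Fin 2 => bW i) := by
        funext i
        fin_cases i <;> rfl
      rw [hfun]
      exact bW.linearIndependent
    have hli : LinearIndependent k ![p, q] := by
      rw [LinearIndependent.pair_iff]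
      intro s t hst
      have hW0 : s • (bW 0) + t • (bW 1) = (0 : W) := by
        apply Subtype.ext
        have hcoe : ((s • (bW 0) + t • (bW 1) : W) : Fin 5 → k) = s • p + t • q := rfl
        rw [hcoe, hst]
        rfl
      exact hpairW.eq_zero_of_pair hW0
    have hMp := hWiso p hpW
    have hMq := hWiso q hqW
    have hMpq : dotProduct p ((a • M0 + b • Minf).mulVec q)
        + dotProduct q ((a • M0 + b • Minf).mulVec p) = 0 := by
      have hsum := hWiso (p + q) (W.add_mem hpW hqW)
      have h := qp_quad_expand' (a • M0 + b • Minf) 1 p q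
      rw [one_smul] at h
      rw [h, hMp, hMq] at hsum
      linear_combination hsum
    by_cases hb : b = 0
    · subst hb
      have ha : a ≠ 0 := by
        intro h
        exact hab (by rw [h])
      obtain ⟨K, fK, aK, hFD, hle, u, hu0, huM, huN⟩ :=
        qp_isotropic_pair (a • M0 + (0 : k) • Minf) Minf p q hli hMp hMq hMpq
      refine ⟨K, fK, aK, hFD, hle, u, hu0, ?_, huN⟩
      letI := fK
      letI := aK
      rw [qp_map_pencil, qp_dot_pencil] at huM
      rw [map_zero, zero_mul, add_zero] at huM
      have ha' : algebraMap k K a ≠ 0 := by simpa using ha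
      rcases mul_eq_zero.mp huM with h | h
      · exact absurd h ha'
      · exact h
    · obtain ⟨K, fK, aK, hFD, hle, u, hu0, huM, huN⟩ :=
        qp_isotropic_pair (a • M0 + b • Minf) M0 p q hli hMp hMq hMpq
      refine ⟨K, fK, aK, hFD, hle, u, hu0, huN, ?_⟩
      letI := fK
      letI := aK
      rw [qp_map_pencil, qp_dot_pencil] at huM
      rw [huN, mul_zero, zero_add] at huM
      have hb' : algebraMap k K b ≠ 0 := by simpa using hb
      rcases mul_eq_zero.mp huM with h | h
      · exact absurd h hb'
      · exact h
end

section
/- For every prime p > 3 there exists α ∈ 𝔽_p^× such that: (1) α is not a square in 𝔽_p; (2) α + 1 is a nonzero square in 𝔽_p; (3) 3α − 1 ≠ 0. Furthermore, if p ∉ {7, 11}, then there exists α ∈ 𝔽_p^× satisfying (1), (2), (3) and additionally (4) 3α − 1 is not a square in 𝔽_p. -/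
/-!
STATEMENT 2: For every prime `p > 3` there is `α ∈ 𝔽_p^×` with `α` a nonsquare,
`α + 1` a nonzero square and `3α − 1 ≠ 0`; if moreover `p ∉ {7, 11}`, `α` can be chosen
with `3α − 1` a nonsquare as well.
-/

open Finset

namespace ExistsAlphaAux

variable {p : ℕ} [Fact p.Prime]

private lemma hchar (hp : 3 < p) : ringChar (ZMod p) ≠ 2 := by
  rw [ZMod.ringChar_zmod_n]; omega

private lemma cast_nat_ne_zero {n : ℕ} (h : ¬ p ∣ n) : ((n : ℕ) : ZMod p) ≠ 0 := by
  rwa [Ne, ZMod.natCast_eq_zero_iff]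

private lemma two_ne (hp : 3 < p) : (2 : ZMod p) ≠ 0 := by
  have h : ¬ p ∣ 2 := fun h => by have := Nat.le_of_dvd (by norm_num) h; omega
  simpa using cast_nat_ne_zero (p := p) h

private lemma three_ne (hp : 3 < p) : (3 : ZMod p) ≠ 0 := by
  have h : ¬ p ∣ 3 := fun h => by have := Nat.le_of_dvd (by norm_num) h; omega
  simpa using cast_nat_ne_zero (p := p) h

private lemma four_ne (hp : 3 < p) : (4 : ZMod p) ≠ 0 := by
  rw [show (4 : ZMod p) = 2 * 2 by norm_num]
  exact mul_ne_zero (two_ne hp) (two_ne hp)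

/-- `∑ χ a = 0`. -/
private lemma sum_chi (hp : 3 < p) : ∑ a : ZMod p, quadraticChar (ZMod p) a = 0 :=
  quadraticChar_sum_zero (hchar hp)

/-- affine substitution sum. -/
private lemma sum_chi_affine (hp : 3 < p) {d : ZMod p} (hd : d ≠ 0) (c : ZMod p) :
    ∑ a : ZMod p, quadraticChar (ZMod p) (d * a + c) = 0 := by
  have h : ∑ a : ZMod p, quadraticChar (ZMod p) (d * a + c)
      = ∑ a : ZMod p, quadraticChar (ZMod p) a := by
    refine Fintype.sum_equiv ((Equiv.mulLeft₀ d hd).trans (Equiv.addRight c)) _ _ (fun x => ?_)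
    simp [Equiv.trans_apply]
  rw [h, sum_chi hp]

/-- Jacobi-type sum: `∑ χ a * χ (a + c) = -1` for `c ≠ 0`. -/
private lemma jacobi (hp : 3 < p) {c : ZMod p} (hc : c ≠ 0) :
    ∑ a : ZMod p, quadraticChar (ZMod p) a * quadraticChar (ZMod p) (a + c) = -1 := by
  set χ := quadraticChar (ZMod p) with hχ
  have h0 : χ (0 : ZMod p) * χ ((0 : ZMod p) + c) = 0 := by
    simp [hχ, quadraticChar_zero]
  calc ∑ a : ZMod p, χ a * χ (a + c)
      = ∑ a ∈ univ.erase (0 : ZMod p), χ a * χ (a + c) :=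
        (Finset.sum_erase (f := fun a => χ a * χ (a + c)) univ h0).symm
    _ = ∑ a ∈ univ.erase (0 : ZMod p), χ (1 + c * a⁻¹) := by
        refine Finset.sum_congr rfl (fun a ha => ?_)
        have ha' : a ≠ 0 := (Finset.mem_erase.mp ha).1
        have e : a + c = a * (1 + c * a⁻¹) := by field_simp
        rw [e, map_mul, ← mul_assoc, ← map_mul, ← sq, quadraticChar_sq_one' ha', one_mul]
    _ = ∑ a ∈ univ.erase (0 : ZMod p), χ (1 + c * a) := by
        refine Finset.sum_nbij' (fun a => a⁻¹) (fun a => a⁻¹) ?_ ?_ ?_ ?_ ?_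
        · intro a ha
          simp only [Finset.mem_erase, Finset.mem_univ, and_true] at ha ⊢
          exact inv_ne_zero ha
        · intro a ha
          simp only [Finset.mem_erase, Finset.mem_univ, and_true] at ha ⊢
          exact inv_ne_zero ha
        · intro a _; exact inv_inv a
        · intro a _; exact inv_inv a
        · intro a _; rfl
    _ = (∑ a : ZMod p, χ (1 + c * a)) - χ (1 + c * 0) := by
        have := Finset.add_sum_erase univ (fun a => χ (1 + c * a)) (Finset.mem_univ (0 : ZMod p))
        linarith [this]
    _ = -1 := by
        have h1 : ∑ a : ZMod p, χ (1 + c * a) = 0 := by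
          have h2 := sum_chi_affine hp hc (1 : ZMod p)
          calc ∑ a : ZMod p, χ (1 + c * a) = ∑ a : ZMod p, χ (c * a + 1) := by
                refine Finset.sum_congr rfl (fun a _ => ?_); ring_nf
            _ = 0 := h2
        rw [h1]
        simp [hχ]

/-- shift sum. -/
private lemma sum_chi_shift (hp : 3 < p) :
    ∑ a : ZMod p, quadraticChar (ZMod p) (a + 1) = 0 := by
  have h : ∑ a : ZMod p, quadraticChar (ZMod p) (a + 1)
      = ∑ a : ZMod p, quadraticChar (ZMod p) a :=
    Fintype.sum_equiv (Equiv.addRight (1 : ZMod p)) _ _ (fun x => by simp)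
  rw [h, sum_chi hp]

private lemma sum_chi_three (hp : 3 < p) :
    ∑ a : ZMod p, quadraticChar (ZMod p) (3 * a - 1) = 0 := by
  have h : ∑ a : ZMod p, quadraticChar (ZMod p) (3 * a - 1)
      = ∑ a : ZMod p, quadraticChar (ZMod p) (3 * a + (-1)) := by
    refine Finset.sum_congr rfl (fun a _ => ?_); rw [sub_eq_add_neg]
  rw [h, sum_chi_affine hp (three_ne hp) (-1)]

private lemma sum_one' : ∑ _a : ZMod p, (1 : ℤ) = (p : ℤ) := by
  simp [Finset.card_univ, ZMod.card]

/-- `∑ χ a χ(3a-1) = ∑ χ(a+1) χ(3a-1)`. -/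
private lemma acbc (hp : 3 < p) :
    ∑ a : ZMod p, quadraticChar (ZMod p) a * quadraticChar (ZMod p) (3 * a - 1)
      = ∑ a : ZMod p, quadraticChar (ZMod p) (a + 1) * quadraticChar (ZMod p) (3 * a - 1) := by
  set χ := quadraticChar (ZMod p) with hχ
  have h4 := four_ne hp
  have h4i : (4 : ZMod p)⁻¹ ≠ 0 := inv_ne_zero h4
  have h44 : (4 : ZMod p) * (4 : ZMod p)⁻¹ = 1 := mul_inv_cancel₀ h4
  refine (Fintype.sum_equiv ((Equiv.addRight (1 : ZMod p)).trans (Equiv.mulRight₀ _ h4i))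
    (fun t => χ (t + 1) * χ (3 * t - 1)) (fun a => χ a * χ (3 * a - 1)) (fun t => ?_)).symm
  have he : ((Equiv.addRight (1 : ZMod p)).trans (Equiv.mulRight₀ _ h4i)) t
      = (t + 1) * (4 : ZMod p)⁻¹ := rfl
  rw [he]
  show χ (t + 1) * χ (3 * t - 1)
      = χ ((t + 1) * (4 : ZMod p)⁻¹) * χ (3 * ((t + 1) * (4 : ZMod p)⁻¹) - 1)
  rw [show (3 : ZMod p) * ((t + 1) * (4 : ZMod p)⁻¹) - 1 = (3 * t - 1) * (4 : ZMod p)⁻¹ from by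
    linear_combination h44, map_mul, map_mul]
  linear_combination (-(χ (t + 1) * χ (3 * t - 1))) * (quadraticChar_sq_one h4i)

/-- Main expansion for part 2. -/
private lemma expand2 (hp : 3 < p) :
    ∑ a : ZMod p, (1 - quadraticChar (ZMod p) a) * (1 + quadraticChar (ZMod p) (a + 1)) *
        (1 - quadraticChar (ZMod p) (3 * a - 1))
      = (p : ℤ) + 1 + ∑ a : ZMod p, quadraticChar (ZMod p) a * quadraticChar (ZMod p) (a + 1) *
        quadraticChar (ZMod p) (3 * a - 1) := by
  set χ := quadraticChar (ZMod p) with hχ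
  have step : ∑ a : ZMod p, (1 - χ a) * (1 + χ (a + 1)) * (1 - χ (3 * a - 1))
      = ∑ a : ZMod p, ((1 : ℤ) - χ a + χ (a + 1) - χ (3 * a - 1) - χ a * χ (a + 1)
          + χ a * χ (3 * a - 1) - χ (a + 1) * χ (3 * a - 1) + χ a * χ (a + 1) * χ (3 * a - 1)) :=
    Finset.sum_congr rfl (fun a _ => by ring)
  rw [step]
  simp only [Finset.sum_add_distrib, Finset.sum_sub_distrib]
  rw [sum_one', sum_chi hp, sum_chi_shift hp, sum_chi_three hp,
    jacobi hp (one_ne_zero : (1 : ZMod p) ≠ 0), acbc hp]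
  ring

/-- Expansion for part 1. -/
private lemma expand1 (hp : 3 < p) :
    ∑ a : ZMod p, (1 - quadraticChar (ZMod p) a) * (1 + quadraticChar (ZMod p) (a + 1))
      = (p : ℤ) + 1 := by
  set χ := quadraticChar (ZMod p) with hχ
  have step : ∑ a : ZMod p, (1 - χ a) * (1 + χ (a + 1))
      = ∑ a : ZMod p, ((1 : ℤ) - χ a + χ (a + 1) - χ a * χ (a + 1)) :=
    Finset.sum_congr rfl (fun a _ => by ring)
  rw [step]
  simp only [Finset.sum_add_distrib, Finset.sum_sub_distrib]
  rw [sum_one', sum_chi hp, sum_chi_shift hp, jacobi hp (one_ne_zero : (1 : ZMod p) ≠ 0)]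
  ring


private lemma ne_zero_of_chi_neg {a : ZMod p} (h : quadraticChar (ZMod p) a = -1) : a ≠ 0 :=
  fun h0 => by simp [h0, quadraticChar_zero] at h

private lemma ne_zero_of_chi_one {a : ZMod p} (h : quadraticChar (ZMod p) a = 1) : a ≠ 0 :=
  fun h0 => by simp [h0, quadraticChar_zero] at h

private lemma p_ge5 (hp : 3 < p) : (5 : ℤ) ≤ (p : ℤ) := by
  have h4 : p ≠ 4 := fun h => by
    have : Nat.Prime 4 := h ▸ Fact.out
    norm_num at this
  have : 5 ≤ p := by omega
  exact_mod_cast this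

/-- Part 1 contradiction. -/
private lemma part1 (hp : 3 < p)
    (hno : ∀ α : ZMod p, quadraticChar (ZMod p) α = -1 →
      quadraticChar (ZMod p) (α + 1) = 1 → 3 * α - 1 = 0) : False := by
  set χ := quadraticChar (ZMod p) with hχ
  have h2 := two_ne hp
  have h3 := three_ne hp
  have h4 := four_ne hp
  have hu : (3 : ZMod p)⁻¹ ≠ 0 := inv_ne_zero h3
  have h3u : (3 : ZMod p) * (3 : ZMod p)⁻¹ = 1 := mul_inv_cancel₀ h3
  have h01 : (0 : ZMod p) ∉ ({-1} : Finset (ZMod p)) := by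
    simp only [Finset.mem_singleton]
    intro h; exact h2 (by linear_combination 2 * h)
  have hvan : ∀ x ∈ (univ : Finset (ZMod p)), x ∉ ({0, -1} : Finset (ZMod p)) →
      (1 - χ x) * (1 + χ (x + 1)) = 0 := by
    intro x _ hx
    simp only [Finset.mem_insert, Finset.mem_singleton] at hx
    push_neg at hx
    by_cases hxu : x = (3 : ZMod p)⁻¹
    · subst hxu
      have e : (3 : ZMod p)⁻¹ + 1 = 2 ^ 2 * (3 : ZMod p)⁻¹ := by linear_combination - h3u
      rw [e, map_mul, quadraticChar_sq_one' h2, one_mul]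
      have hsq := quadraticChar_sq_one (F := ZMod p) hu
      linear_combination - hsq
    · have hx3 : 3 * x - 1 ≠ 0 := by
        intro h
        apply hxu
        have h31 : (3 : ZMod p) * x = 1 := by linear_combination h
        field_simp
        linear_combination h31
      rcases quadraticChar_dichotomy (F := ZMod p) hx.1 with h | h
      · rw [h]; ring
      · have hx1 : x + 1 ≠ 0 := fun hh => hx.2 (by linear_combination hh)
        rcases quadraticChar_dichotomy (F := ZMod p) hx1 with h' | h'
        · exact absurd (hno x h h') hx3
        · rw [h']; ring
  have hS : ∑ a : ZMod p, (1 - χ a) * (1 + χ (a + 1))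
      = ∑ a ∈ ({0, -1} : Finset (ZMod p)), (1 - χ a) * (1 + χ (a + 1)) :=
    (Finset.sum_subset (Finset.subset_univ _) hvan).symm
  rw [expand1 hp] at hS
  rw [Finset.sum_insert h01, Finset.sum_singleton] at hS
  rw [show (0 : ZMod p) + 1 = 1 by ring, show (-1 : ZMod p) + 1 = 0 by ring] at hS
  rw [quadraticChar_zero, map_one] at hS
  have hm1 : (-1 : ZMod p) ≠ 0 := neg_ne_zero.mpr one_ne_zero
  have hp5 := p_ge5 (p := p) hp
  rcases quadraticChar_dichotomy (F := ZMod p) hm1 with h | h <;> rw [h] at hS <;> linarith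

/-- The witness bound for part 2, case χ(-1) = -1. -/
private lemma bound (hp : 3 < p) {w : ZMod p}
    (hw0 : w ≠ 0) (hw1 : w ≠ -1) (hwu : w ≠ (3 : ZMod p)⁻¹) (hwo : w ≠ 1)
    (hwnu : w ≠ -(3 : ZMod p)⁻¹)
    (hgw : quadraticChar (ZMod p) w * quadraticChar (ZMod p) (w + 1) *
      quadraticChar (ZMod p) (3 * w - 1) = 1) :
    (9 : ℤ) - (p : ℤ) ≤ ∑ a : ZMod p, quadraticChar (ZMod p) a *
      quadraticChar (ZMod p) (a + 1) * quadraticChar (ZMod p) (3 * a - 1) := by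
  set χ := quadraticChar (ZMod p) with hχ
  have h2 := two_ne hp
  have h3 := three_ne hp
  have h4 := four_ne hp
  have hu : (3 : ZMod p)⁻¹ ≠ 0 := inv_ne_zero h3
  have h3u : (3 : ZMod p) * (3 : ZMod p)⁻¹ = 1 := mul_inv_cancel₀ h3
  have hu2 : 2 * (3 : ZMod p)⁻¹ ≠ 0 := mul_ne_zero h2 hu
  -- pairwise distinctness
  have n01 : (0 : ZMod p) ≠ -1 := fun h => h2 (by linear_combination 2 * h)
  have n0u : (0 : ZMod p) ≠ (3 : ZMod p)⁻¹ := Ne.symm hu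
  have n0o : (0 : ZMod p) ≠ 1 := Ne.symm one_ne_zero
  have n0nu : (0 : ZMod p) ≠ -(3 : ZMod p)⁻¹ := Ne.symm (neg_ne_zero.mpr hu)
  have n1u : (-1 : ZMod p) ≠ (3 : ZMod p)⁻¹ := fun h =>
    h4 (by linear_combination (-3) * h + (-1) * h3u)
  have n1o : (-1 : ZMod p) ≠ 1 := fun h => h2 (by linear_combination - h)
  have n1nu : (-1 : ZMod p) ≠ -(3 : ZMod p)⁻¹ := fun h =>
    h2 (by linear_combination (-3) * h + h3u)
  have nuo : ((3 : ZMod p)⁻¹ : ZMod p) ≠ 1 := fun h => h2 (by linear_combination (-3) * h + h3u)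
  have nunu : ((3 : ZMod p)⁻¹ : ZMod p) ≠ -(3 : ZMod p)⁻¹ := fun h =>
    h2 (by linear_combination 3 * h + (-2) * h3u)
  have nonu : (1 : ZMod p) ≠ -(3 : ZMod p)⁻¹ := fun h => h4 (by linear_combination 3 * h + (-1) * h3u)
  -- membership
  have h0m : (0 : ZMod p) ∉ ({-1, (3 : ZMod p)⁻¹, 1, -(3 : ZMod p)⁻¹, w} : Finset (ZMod p)) := by
    simp only [Finset.mem_insert, Finset.mem_singleton]
    push_neg
    exact ⟨n01, n0u, n0o, n0nu, Ne.symm hw0⟩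
  have h1m : (-1 : ZMod p) ∉ ({(3 : ZMod p)⁻¹, 1, -(3 : ZMod p)⁻¹, w} : Finset (ZMod p)) := by
    simp only [Finset.mem_insert, Finset.mem_singleton]
    push_neg
    exact ⟨n1u, n1o, n1nu, Ne.symm hw1⟩
  have hum : ((3 : ZMod p)⁻¹ : ZMod p) ∉ ({1, -(3 : ZMod p)⁻¹, w} : Finset (ZMod p)) := by
    simp only [Finset.mem_insert, Finset.mem_singleton]
    push_neg
    exact ⟨nuo, nunu, Ne.symm hwu⟩
  have hom : (1 : ZMod p) ∉ ({-(3 : ZMod p)⁻¹, w} : Finset (ZMod p)) := by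
    simp only [Finset.mem_insert, Finset.mem_singleton]
    push_neg
    exact ⟨nonu, Ne.symm hwo⟩
  have hnum : (-(3 : ZMod p)⁻¹ : ZMod p) ∉ ({w} : Finset (ZMod p)) := by
    simp only [Finset.mem_singleton]
    exact Ne.symm hwnu
  -- nonnegativity
  have hq := quadraticChar_isQuadratic (ZMod p)
  have hnn : ∀ a : ZMod p, (0 : ℤ) ≤ χ a * χ (a + 1) * χ (3 * a - 1) + 1 := by
    intro a
    rw [← map_mul, ← map_mul]
    rcases hq (a * (a + 1) * (3 * a - 1)) with h | h | h <;> rw [h] <;> norm_num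
  -- the sum over the six points
  have hle := Finset.sum_le_sum_of_subset_of_nonneg
    (Finset.subset_univ ({0, -1, (3 : ZMod p)⁻¹, 1, -(3 : ZMod p)⁻¹, w} : Finset (ZMod p)))
    (fun i _ _ => hnn i)
  rw [Finset.sum_insert h0m, Finset.sum_insert h1m, Finset.sum_insert hum,
    Finset.sum_insert hom, Finset.sum_insert hnum, Finset.sum_singleton] at hle
  -- values at the six points
  have hz : χ (0 : ZMod p) = 0 := quadraticChar_zero
  have v0 : χ (0 : ZMod p) * χ ((0 : ZMod p) + 1) * χ (3 * (0 : ZMod p) - 1) + 1 = 1 := by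
    rw [hz]; ring
  have v1 : χ (-1 : ZMod p) * χ ((-1 : ZMod p) + 1) * χ (3 * (-1 : ZMod p) - 1) + 1 = 1 := by
    rw [show ((-1 : ZMod p) + 1) = 0 by ring, hz]; ring
  have vu : χ ((3 : ZMod p)⁻¹) * χ ((3 : ZMod p)⁻¹ + 1) * χ (3 * (3 : ZMod p)⁻¹ - 1) + 1 = 1 := by
    rw [show (3 * (3 : ZMod p)⁻¹ - 1 : ZMod p) = 0 by linear_combination h3u, hz]; ring
  have vo : χ (1 : ZMod p) * χ ((1 : ZMod p) + 1) * χ (3 * (1 : ZMod p) - 1) + 1 = 2 := by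
    rw [show ((1 : ZMod p) + 1) = 2 by norm_num, show (3 * (1 : ZMod p) - 1) = 2 by norm_num,
      map_one, one_mul]
    have hsq := quadraticChar_sq_one (F := ZMod p) h2
    linear_combination hsq
  have vnu : χ (-(3 : ZMod p)⁻¹) * χ (-(3 : ZMod p)⁻¹ + 1) * χ (3 * (-(3 : ZMod p)⁻¹) - 1) + 1
      = 2 := by
    rw [← map_mul, ← map_mul,
      show (-(3 : ZMod p)⁻¹) * (-(3 : ZMod p)⁻¹ + 1) * (3 * (-(3 : ZMod p)⁻¹) - 1)
        = (2 * (3 : ZMod p)⁻¹) ^ 2 from by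
          linear_combination (-((3 : ZMod p)⁻¹ * ((3 : ZMod p)⁻¹ + 1))) * h3u,
      quadraticChar_sq_one' hu2]
    norm_num
  have vw : χ w * χ (w + 1) * χ (3 * w - 1) + 1 = 2 := by linear_combination hgw
  rw [v0, v1, vu, vo, vnu, vw] at hle
  -- total sum
  have htot : ∑ a : ZMod p, (χ a * χ (a + 1) * χ (3 * a - 1) + 1)
      = (∑ a : ZMod p, χ a * χ (a + 1) * χ (3 * a - 1)) + (p : ℤ) := by
    rw [Finset.sum_add_distrib, sum_one']
  rw [htot] at hle
  linarith

private lemma isq5 : IsSquare (-1 : ZMod 5) := ⟨2, by decide⟩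

/-- Part 2 contradiction. -/
private lemma part2 (hp : 3 < p) (hp7 : p ≠ 7) (hp11 : p ≠ 11)
    (hno : ∀ α : ZMod p, ¬(quadraticChar (ZMod p) α = -1 ∧
      quadraticChar (ZMod p) (α + 1) = 1 ∧ quadraticChar (ZMod p) (3 * α - 1) = -1)) : False := by
  set χ := quadraticChar (ZMod p) with hχ
  have h2 := two_ne hp
  have h3 := three_ne hp
  have h4 := four_ne hp
  have hu : (3 : ZMod p)⁻¹ ≠ 0 := inv_ne_zero h3
  have h3u : (3 : ZMod p) * (3 : ZMod p)⁻¹ = 1 := mul_inv_cancel₀ h3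
  have h01 : (0 : ZMod p) ∉ ({-1} : Finset (ZMod p)) := by
    simp only [Finset.mem_singleton]
    intro h; exact h2 (by linear_combination 2 * h)
  -- vanishing off {0,-1}
  have hvan : ∀ x ∈ (univ : Finset (ZMod p)), x ∉ ({0, -1} : Finset (ZMod p)) →
      (1 - χ x) * (1 + χ (x + 1)) * (1 - χ (3 * x - 1)) = 0 := by
    intro x _ hx
    simp only [Finset.mem_insert, Finset.mem_singleton] at hx
    push_neg at hx
    by_cases hxu : x = (3 : ZMod p)⁻¹
    · subst hxu
      rw [show (3 * (3 : ZMod p)⁻¹ - 1 : ZMod p) = 0 by linear_combination h3u,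
        quadraticChar_zero,
        show ((3 : ZMod p)⁻¹ + 1) = 2 ^ 2 * (3 : ZMod p)⁻¹ by linear_combination - h3u,
        map_mul, quadraticChar_sq_one' h2, one_mul]
      have hsq : χ ((3 : ZMod p)⁻¹) ^ 2 = 1 := quadraticChar_sq_one hu
      linear_combination - hsq
    · have hx3 : 3 * x - 1 ≠ 0 := by
        intro h
        apply hxu
        have h31 : (3 : ZMod p) * x = 1 := by linear_combination h
        field_simp
        linear_combination h31
      rcases quadraticChar_dichotomy (F := ZMod p) hx.1 with h | h
      · rw [h]; ring
      · have hx1 : x + 1 ≠ 0 := fun hh => hx.2 (by linear_combination hh)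
        rcases quadraticChar_dichotomy (F := ZMod p) hx1 with h' | h'
        · rcases quadraticChar_dichotomy (F := ZMod p) hx3 with h'' | h''
          · rw [h'']; ring
          · exact absurd ⟨h, h', h''⟩ (hno x)
        · rw [h']; ring
  have hS : ∑ a : ZMod p, (1 - χ a) * (1 + χ (a + 1)) * (1 - χ (3 * a - 1))
      = ∑ a ∈ ({0, -1} : Finset (ZMod p)),
        (1 - χ a) * (1 + χ (a + 1)) * (1 - χ (3 * a - 1)) :=
    (Finset.sum_subset (Finset.subset_univ _) hvan).symm
  rw [expand2 hp] at hS
  rw [Finset.sum_insert h01, Finset.sum_singleton] at hS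
  rw [show (0 : ZMod p) + 1 = 1 by ring, show (-1 : ZMod p) + 1 = 0 by ring,
    show (3 * (0 : ZMod p) - 1) = -1 by ring,
    show (3 * (-1 : ZMod p) - 1) = -1 * 2 ^ 2 by ring] at hS
  rw [quadraticChar_zero, map_one, map_mul, quadraticChar_sq_one' h2, mul_one] at hS
  have hm1 : (-1 : ZMod p) ≠ 0 := neg_ne_zero.mpr one_ne_zero
  have hp5 := p_ge5 (p := p) hp
  rcases quadraticChar_dichotomy (F := ZMod p) hm1 with hε | hε
  · -- χ(-1) = 1 : RHS = 0 but LHS ≥ 1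
    rw [hε] at hS
    have hq := quadraticChar_isQuadratic (ZMod p)
    have hnn : ∀ a : ZMod p, (-1 : ℤ) ≤ χ a * χ (a + 1) * χ (3 * a - 1) := by
      intro a
      rw [← map_mul, ← map_mul]
      rcases hq (a * (a + 1) * (3 * a - 1)) with h | h | h <;> rw [h] <;> norm_num
    have hT : -(p : ℤ) ≤ ∑ a : ZMod p, χ a * χ (a + 1) * χ (3 * a - 1) := by
      calc -(p : ℤ) = ∑ _a : ZMod p, (-1 : ℤ) := by
            simp [Finset.sum_const, Finset.card_univ, ZMod.card]
        _ ≤ _ := Finset.sum_le_sum (fun a _ => hnn a)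
    linarith
  · -- χ(-1) = -1
    rw [hε] at hS
    -- derive 5 ≠ 0
    have h5 : (5 : ZMod p) ≠ 0 := by
      intro h
      have hc : ((5 : ℕ) : ZMod p) = 0 := by exact_mod_cast h
      have hd : p ∣ 5 := (ZMod.natCast_eq_zero_iff 5 p).mp hc
      have h5p : p = 5 := (Nat.prime_dvd_prime_iff_eq Fact.out (by norm_num)).mp hd
      subst h5p
      rw [quadraticChar_neg_one_iff_not_isSquare] at hε
      exact hε isq5
    have h7z : (7 : ZMod p) ≠ 0 := by
      intro h
      have hc : ((7 : ℕ) : ZMod p) = 0 := by exact_mod_cast h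
      have hd : p ∣ 7 := (ZMod.natCast_eq_zero_iff 7 p).mp hc
      exact hp7 ((Nat.prime_dvd_prime_iff_eq Fact.out (by norm_num)).mp hd)
    have h11z : (11 : ZMod p) ≠ 0 := by
      intro h
      have hc : ((11 : ℕ) : ZMod p) = 0 := by exact_mod_cast h
      have hd : p ∣ 11 := (ZMod.natCast_eq_zero_iff 11 p).mp hc
      exact hp11 ((Nat.prime_dvd_prime_iff_eq Fact.out (by norm_num)).mp hd)
    have h6 : (6 : ZMod p) ≠ 0 := by
      rw [show (6 : ZMod p) = 2 * 3 by norm_num]; exact mul_ne_zero h2 h3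
    have h8 : (8 : ZMod p) ≠ 0 := by
      rw [show (8 : ZMod p) = 2 * 4 by norm_num]; exact mul_ne_zero h2 h4
    have h9 : (9 : ZMod p) ≠ 0 := by
      rw [show (9 : ZMod p) = 3 * 3 by norm_num]; exact mul_ne_zero h3 h3
    have h14 : (14 : ZMod p) ≠ 0 := by
      rw [show (14 : ZMod p) = 2 * 7 by norm_num]; exact mul_ne_zero h2 h7z
    have h16 : (16 : ZMod p) ≠ 0 := by
      rw [show (16 : ZMod p) = 4 * 4 by norm_num]; exact mul_ne_zero h4 h4
    have h22 : (22 : ZMod p) ≠ 0 := by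
      rw [show (22 : ZMod p) = 2 * 11 by norm_num]; exact mul_ne_zero h2 h11z
    have h32 : (32 : ZMod p) ≠ 0 := by
      rw [show (32 : ZMod p) = 2 * 16 by norm_num]; exact mul_ne_zero h2 h16
    have h24 : (24 : ZMod p) ≠ 0 := by
      rw [show (24 : ZMod p) = 4 * 6 by norm_num]; exact mul_ne_zero h4 h6
    have hv : (5 : ZMod p)⁻¹ ≠ 0 := inv_ne_zero h5
    have h5v : (5 : ZMod p) * (5 : ZMod p)⁻¹ = 1 := mul_inv_cancel₀ h5
    -- produce the witness bound
    have hbd : (9 : ℤ) - (p : ℤ) ≤ ∑ a : ZMod p, χ a * χ (a + 1) * χ (3 * a - 1) := by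
      by_cases hs5 : IsSquare (5 : ZMod p)
      · have hχ5 : χ (5 : ZMod p) = 1 := (quadraticChar_one_iff_isSquare h5).mpr hs5
        by_cases hs2 : IsSquare (2 : ZMod p)
        · -- w = -(5⁻¹)
          have hχ2 : χ (2 : ZMod p) = 1 := (quadraticChar_one_iff_isSquare h2).mpr hs2
          refine bound hp (w := -(5 : ZMod p)⁻¹) (neg_ne_zero.mpr hv)
            (fun h => h4 (by linear_combination 5 * h + h5v))
            (fun h => h8 (by linear_combination (-15) * h + (-5) * h3u + (-3) * h5v))
            (fun h => h6 (by linear_combination (-5) * h + (-1) * h5v))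
            (fun h => h2 (by linear_combination 15 * h + (-5) * h3u + 3 * h5v)) ?_
          rw [← map_mul, ← map_mul,
            show (-(5 : ZMod p)⁻¹) * (-(5 : ZMod p)⁻¹ + 1) * (3 * (-(5 : ZMod p)⁻¹) - 1)
              = 2 * 5 * (4 * (5 : ZMod p)⁻¹ ^ 2) ^ 2 from by
                linear_combination ((-32) * (5 : ZMod p)⁻¹ ^ 3 - 7 * (5 : ZMod p)⁻¹ ^ 2
                  - (5 : ZMod p)⁻¹) * h5v,
            map_mul, map_mul,
            quadraticChar_sq_one' (mul_ne_zero h4 (pow_ne_zero 2 hv)), hχ2, hχ5]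
          norm_num
        · -- w = -(9 * 5⁻¹)
          have hχ2 : χ (2 : ZMod p) = -1 := quadraticChar_neg_one_iff_not_isSquare.mpr hs2
          refine bound hp (w := -(9 * (5 : ZMod p)⁻¹)) (neg_ne_zero.mpr (mul_ne_zero h9 hv))
            (fun h => h4 (by linear_combination (-5) * h + (-9) * h5v))
            (fun h => h32 (by linear_combination (-15) * h + (-5) * h3u + (-27) * h5v))
            (fun h => h14 (by linear_combination (-5) * h + (-9) * h5v))
            (fun h => h22 (by linear_combination (-15) * h + 5 * h3u + (-27) * h5v)) ?_
          rw [← map_mul, ← map_mul,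
            show (-(9 * (5 : ZMod p)⁻¹)) * (-(9 * (5 : ZMod p)⁻¹) + 1) *
                (3 * (-(9 * (5 : ZMod p)⁻¹)) - 1)
              = -1 * 2 * 5 * (24 * (5 : ZMod p)⁻¹ ^ 2) ^ 2 from by
                linear_combination (1152 * (5 : ZMod p)⁻¹ ^ 3 - 207 * (5 : ZMod p)⁻¹ ^ 2
                  - 9 * (5 : ZMod p)⁻¹) * h5v,
            map_mul, map_mul, map_mul,
            quadraticChar_sq_one' (mul_ne_zero h24 (pow_ne_zero 2 hv)), hχ2, hχ5, hε]
          norm_num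
      · -- w = -5
        have hχ5 : χ (5 : ZMod p) = -1 := quadraticChar_neg_one_iff_not_isSquare.mpr hs5
        refine bound hp (w := (-5 : ZMod p)) (neg_ne_zero.mpr h5)
          (fun h => h4 (by linear_combination - h))
          (fun h => h16 (by linear_combination (-3) * h + (-1) * h3u))
          (fun h => h6 (by linear_combination - h))
          (fun h => h14 (by linear_combination (-3) * h + h3u)) ?_
        rw [← map_mul, ← map_mul,
          show ((-5 : ZMod p)) * ((-5 : ZMod p) + 1) * (3 * (-5 : ZMod p) - 1)
            = -1 * 5 * (8 : ZMod p) ^ 2 from by ring,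
          map_mul, map_mul, quadraticChar_sq_one' h8, hχ5, hε]
        norm_num
    linarith

end ExistsAlphaAux

theorem exists_alpha_in_Fp (p : ℕ) [Fact p.Prime] (hp : 3 < p) :
    (∃ α : ZMod p, α ≠ 0 ∧ ¬ IsSquare α ∧ α + 1 ≠ 0 ∧ IsSquare (α + 1) ∧ 3 * α - 1 ≠ 0) ∧
    (p ≠ 7 → p ≠ 11 →
      ∃ α : ZMod p, α ≠ 0 ∧ ¬ IsSquare α ∧ α + 1 ≠ 0 ∧ IsSquare (α + 1) ∧ 3 * α - 1 ≠ 0 ∧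
        ¬ IsSquare (3 * α - 1)) := by
  constructor
  · by_contra hne
    refine ExistsAlphaAux.part1 hp (fun α h1 h2 => ?_)
    by_contra h3
    apply hne
    exact ⟨α, ExistsAlphaAux.ne_zero_of_chi_neg h1,
      quadraticChar_neg_one_iff_not_isSquare.mp h1,
      ExistsAlphaAux.ne_zero_of_chi_one h2,
      (quadraticChar_one_iff_isSquare (ExistsAlphaAux.ne_zero_of_chi_one h2)).mp h2, h3⟩
  · intro hp7 hp11
    by_contra hne
    refine ExistsAlphaAux.part2 hp hp7 hp11 (fun α htriple => ?_)
    obtain ⟨h1, h2, h3⟩ := htriple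
    apply hne
    exact ⟨α, ExistsAlphaAux.ne_zero_of_chi_neg h1,
      quadraticChar_neg_one_iff_not_isSquare.mp h1,
      ExistsAlphaAux.ne_zero_of_chi_one h2,
      (quadraticChar_one_iff_isSquare (ExistsAlphaAux.ne_zero_of_chi_one h2)).mp h2,
      ExistsAlphaAux.ne_zero_of_chi_neg h3,
      quadraticChar_neg_one_iff_not_isSquare.mp h3⟩
end

section
/- Let p be an odd prime and α ∈ 𝔽_p^× a nonsquare. Let π ∈ 𝔽_p[t] be monic irreducible and let δ ∈ {1, −1}. Define q_{π,δ} = π if δ = 1 and q_{π,δ} = απ if δ = −1 (so q_{π,δ} generates the prime ideal (π)). Then for every irreducible polynomial D ∈ 𝔽_p[t] of odd degree with leading coefficient −1 and with (D) ≠ (π), one has (q_{π,δ} / D) = 1 if and only if (D / π) = δ. -/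
/-!
STATEMENT 6: quadratic reciprocity trick.  For `π` monic irreducible in `𝔽_p[t]`, `δ = ±1`
and `q_{π,δ} = π` (if `δ = 1`) or `απ` (if `δ = −1`), and any irreducible `D` of odd degree
with leading coefficient `−1` generating a different prime ideal,
`(q_{π,δ}/D) = 1 ↔ (D/π) = δ`.
-/

open Polynomial

/-- The Legendre symbol of `a` modulo the prime ideal generated by an irreducible
polynomial `π` over `𝔽_p`: `1` if `a` is a square modulo `π`, `-1` otherwise. -/
noncomputable def polyLegendreSym {p : ℕ} [Fact p.Prime] (a π : Polynomial (ZMod p)) : ℤ :=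
  letI := Classical.dec (IsSquare (Ideal.Quotient.mk (Ideal.span {π}) a))
  if IsSquare (Ideal.Quotient.mk (Ideal.span {π}) a) then 1 else -1

/-! ### Auxiliary arithmetic lemmas -/

section Arith

lemma FFQR.geom_mul (p m : ℕ) (hp : 1 ≤ p) :
    (∑ j ∈ Finset.range m, p ^ j) * (p - 1) = p ^ m - 1 := by
  induction m with
  | zero => simp
  | succ k ih =>
    rw [Finset.sum_range_succ, add_mul, ih, pow_succ]
    have h1 : 1 ≤ p ^ k := Nat.one_le_pow _ _ hp
    have h2 : p ^ k ≤ p ^ k * p := Nat.le_mul_of_pos_right _ hp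
    have : p ^ k * (p - 1) = p ^ k * p - p ^ k := by
      rw [Nat.mul_sub, mul_one]
    omega

lemma FFQR.geom_parity (p : ℕ) (hp : p % 2 = 1) (k : ℕ) :
    (∑ j ∈ Finset.range k, p ^ j) % 2 = k % 2 := by
  induction k with
  | zero => simp
  | succ n ih =>
    rw [Finset.sum_range_succ]
    have : p ^ n % 2 = 1 := by
      rw [Nat.pow_mod, hp, one_pow]
      rfl
    omega

lemma FFQR.half_pow (p m : ℕ) (hp : p % 2 = 1) (h1 : 1 ≤ p) :
    p ^ m / 2 = (∑ j ∈ Finset.range m, p ^ j) * ((p - 1) / 2) := by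
  have h2 : 2 ∣ p - 1 := by omega
  rw [Nat.mul_div_assoc _ h2 |>.symm, FFQR.geom_mul p m h1]
  have : p ^ m % 2 = 1 := by rw [Nat.pow_mod, hp, one_pow]; rfl
  omega

lemma FFQR.multiset_range_map_shift {α : Type*} (f : ℕ → α) (m : ℕ) (h : f m = f 0) :
    (Multiset.range m).map (fun j => f (j + 1)) = (Multiset.range m).map f := by
  have key : f 0 ::ₘ (Multiset.range m).map (fun j => f (j + 1)) =
      f 0 ::ₘ (Multiset.range m).map f := by
    have h1 : (0 ::ₘ (Multiset.range m).map Nat.succ) = Multiset.range (m + 1) := by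
      rw [show Multiset.range (m + 1) = ((List.range (m + 1) : List ℕ) : Multiset ℕ) from rfl,
        List.range_succ_eq_map]
      rfl
    have h2 : f 0 ::ₘ (Multiset.range m).map (fun j => f (j + 1)) =
        ((0 ::ₘ (Multiset.range m).map Nat.succ).map f) := by
      simp [Multiset.map_map, Function.comp_def]
    rw [h2, h1, Multiset.range_succ, Multiset.map_cons, h]
  exact (Multiset.cons_inj_right _).mp key

end Arith

/-! ### Frobenius and the algebraic closure of `ZMod p` -/

section Fixed
variable {p : ℕ} [Fact p.Prime]

local notation "Ω" => AlgebraicClosure (ZMod p)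
local notation "ψ" => algebraMap (ZMod p) (AlgebraicClosure (ZMod p))

lemma FFQR.exists_of_pow_eq (x : Ω) (hx : x ^ p = x) : ∃ c : ZMod p, ψ c = x := by
  classical
  have hp1 : 1 < p := (Fact.out : p.Prime).one_lt
  set f : Polynomial Ω := X ^ p - X with hf
  have hfm : f.Monic := by
    apply monic_X_pow_sub
    rw [degree_X]
    exact_mod_cast hp1
  have hf0 : f ≠ 0 := hfm.ne_zero
  have hdeg : f.natDegree = p := by
    have hlt : (X : Polynomial Ω).natDegree < (X ^ p : Polynomial Ω).natDegree := by
      rw [natDegree_X, natDegree_X_pow]; exact hp1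
    rw [hf, natDegree_sub_eq_left_of_natDegree_lt hlt, natDegree_X_pow]
  have hinj : Function.Injective (ψ) := (ψ).injective
  set S : Finset Ω := Finset.univ.image (ψ) with hS
  have hcardS : S.card = p := by
    rw [hS, Finset.card_image_of_injective _ hinj, Finset.card_univ, ZMod.card]
  have hsub : S ⊆ f.roots.toFinset := by
    intro y hy
    rw [hS, Finset.mem_image] at hy
    obtain ⟨c, _, rfl⟩ := hy
    rw [Multiset.mem_toFinset, mem_roots hf0]
    simp only [IsRoot.def, hf, eval_sub, eval_pow, eval_X]
    rw [← map_pow, ZMod.pow_card, sub_self]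
  have hcard2 : f.roots.toFinset.card ≤ p := by
    calc f.roots.toFinset.card ≤ Multiset.card f.roots := Multiset.toFinset_card_le _
    _ ≤ f.natDegree := f.card_roots'
    _ = p := hdeg
  have heq : S = f.roots.toFinset := Finset.eq_of_subset_of_card_le hsub (by omega)
  have hxr : x ∈ f.roots.toFinset := by
    rw [Multiset.mem_toFinset, mem_roots hf0]
    simp [hf, IsRoot.def, hx]
  rw [← heq, hS, Finset.mem_image] at hxr
  obtain ⟨c, _, hc⟩ := hxr
  exact ⟨c, hc⟩

lemma FFQR.eval_map_pow (a : Polynomial (ZMod p)) (y : Ω) :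
    (eval y (a.map (ψ))) ^ p = eval (y ^ p) (a.map (ψ)) := by
  haveI : CharP Ω p := charP_of_injective_algebraMap (ψ).injective p
  have h1 : (frobenius Ω p) (eval y (a.map (ψ))) = eval₂ (frobenius Ω p) ((frobenius Ω p) y)
      (a.map (ψ)) := (Polynomial.eval₂_hom (frobenius Ω p) y).symm
  have h2 : eval₂ (frobenius Ω p) ((frobenius Ω p) y) (a.map (ψ)) =
      eval (y ^ p) ((a.map ψ).map (frobenius Ω p)) := by
    rw [eval_map]; rfl
  have h3 : (a.map ψ).map (frobenius Ω p) = a.map ψ := by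
    rw [Polynomial.map_map]
    congr 1
    exact RingHom.ext_zmod _ _
  calc (eval y (a.map ψ)) ^ p = (frobenius Ω p) (eval y (a.map ψ)) := rfl
  _ = eval (y ^ p) (a.map ψ) := by rw [h1, h2, h3]

lemma FFQR.eval_map_pow_iter (a : Polynomial (ZMod p)) (y : Ω) (j : ℕ) :
    eval (y ^ p ^ j) (a.map (ψ)) = (eval y (a.map (ψ))) ^ p ^ j := by
  induction j with
  | zero => simp
  | succ k ih =>
    rw [pow_succ, pow_mul, ← FFQR.eval_map_pow, ih, ← pow_mul, ← pow_succ]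

/-! ### Roots of an irreducible polynomial form a Frobenius orbit -/

lemma FFQR.aroots_eq_orbit {π : Polynomial (ZMod p)} (hπm : π.Monic) (hπ : Irreducible π)
    {β : Ω} (hβ : eval β (π.map (ψ)) = 0) (hβm : β ^ p ^ π.natDegree = β) :
    π.aroots Ω = (Multiset.range π.natDegree).map (fun j => β ^ p ^ j) := by
  classical
  set m := π.natDegree with hm
  set s : Multiset Ω := (Multiset.range m).map (fun j => β ^ p ^ j) with hs
  set g : Polynomial Ω := (s.map (fun a => X - C a)).prod with hg
  have hcards : Multiset.card s = m := by simp [hs]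
  have hgm : g.Monic := monic_multiset_prod_of_monic _ _ (fun a _ => monic_X_sub_C a)
  have hgdeg : g.natDegree = m := by
    rw [hg, natDegree_multiset_prod_X_sub_C_eq_card, hcards]
  have hper : ∀ k, β ^ p ^ (k + m) = β ^ p ^ k := by
    intro k
    rw [pow_add, mul_comm, pow_mul, hβm]
  -- g is fixed by frobenius
  have hsfrob : s.map (fun a => a ^ p) = s := by
    rw [hs, Multiset.map_map]
    have h1 : ((fun a : Ω => a ^ p) ∘ fun j : ℕ => β ^ p ^ j) = fun j => β ^ p ^ (j + 1) := by
      funext j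
      simp only [Function.comp_apply]
      rw [← pow_mul, ← pow_succ]
    rw [h1]
    exact FFQR.multiset_range_map_shift (fun j => β ^ p ^ j) m
      (by show β ^ p ^ m = β ^ p ^ 0; rw [hβm, pow_zero, pow_one])
  have hmapfrob : g.map (frobenius Ω p) = g := by
    conv_lhs => rw [hg]
    conv_rhs => rw [hg, ← hsfrob]
    rw [Polynomial.map_multiset_prod, Multiset.map_map, Multiset.map_map, Multiset.map_map, hs,
      Multiset.map_map]
    apply congrArg
    apply Multiset.map_congr rfl
    intro a _
    simp only [Function.comp_apply]
    rw [Polynomial.map_sub, Polynomial.map_X, Polynomial.map_C]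
    rfl
  -- coefficients of g are fixed, so g lifts
  have hlift : g ∈ Polynomial.lifts (ψ) := by
    rw [lifts_iff_coeff_lifts]
    intro n
    have : (g.coeff n) ^ p = g.coeff n := by
      conv_rhs => rw [← hmapfrob]
      rw [coeff_map]
      rfl
    obtain ⟨c, hc⟩ := FFQR.exists_of_pow_eq (g.coeff n) this
    exact ⟨c, hc⟩
  obtain ⟨g₀, hg₀map, hg₀deg, hg₀monic⟩ := lifts_and_degree_eq_and_monic hlift hgm
  -- β is a root of g
  have hβs : β ∈ s := by
    rw [hs]
    refine Multiset.mem_map.mpr ⟨0, ?_, by norm_num⟩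
    rw [Multiset.mem_range]
    have : 0 < m := natDegree_pos_iff_degree_pos.mpr (degree_pos_of_irreducible hπ)
    omega
  have hgroots : g.roots = s := by rw [hg, roots_multiset_prod_X_sub_C]
  have hβg : eval β g = 0 := by
    have : β ∈ g.roots := by rw [hgroots]; exact hβs
    exact (mem_roots hgm.ne_zero).mp this
  -- π is the minimal polynomial of β
  have haevalβ : (aeval β) π = 0 := by
    rwa [aeval_def, ← eval_map]
  have hminpoly : π = minpoly (ZMod p) β := minpoly.eq_of_irreducible_of_monic hπ haevalβ hπm
  have hdvd : π ∣ g₀ := by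
    rw [hminpoly]
    apply minpoly.dvd
    rw [aeval_def, ← eval_map, hg₀map]
    exact hβg
  -- degrees match, so π = g₀
  have hg₀deg' : g₀.natDegree = m := by
    have := natDegree_eq_of_degree_eq hg₀deg
    rwa [hgdeg] at this
  have heq : π = g₀ := by
    obtain ⟨c, hc⟩ := hdvd
    have hc0 : c ≠ 0 := by
      rintro rfl
      rw [mul_zero] at hc
      exact hg₀monic.ne_zero hc
    have hdeg : c.natDegree = 0 := by
      have := natDegree_mul hπm.ne_zero hc0
      rw [← hc, hg₀deg', ← hm] at this
      omega
    have hcm : c.leadingCoeff = 1 := by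
      have := hg₀monic
      rw [hc] at this
      have h2 : (π * c).leadingCoeff = π.leadingCoeff * c.leadingCoeff := leadingCoeff_mul π c
      rw [Monic.def] at this
      rw [this, hπm.leadingCoeff, one_mul] at h2
      exact h2.symm
    have hcc : c.coeff 0 = 1 := by
      have h3 : c.leadingCoeff = c.coeff 0 := by rw [Polynomial.leadingCoeff, hdeg]
      rw [← h3, hcm]
    have : c = 1 := by
      rw [eq_C_of_natDegree_eq_zero hdeg, hcc, map_one]
    rw [hc, this, mul_one]
  rw [aroots, heq, hg₀map, hgroots]

/-! ### The square criterion via the product over the roots -/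

lemma FFQR.isSquare_mk_iff (hp2 : p ≠ 2) {π : Polynomial (ZMod p)} (hπm : π.Monic)
    (hπ : Irreducible π) {a : Polynomial (ZMod p)} (ha : ¬ π ∣ a) :
    IsSquare (AdjoinRoot.mk π a) ↔
      (((π.aroots Ω).map (fun y => eval y (a.map (ψ)))).prod) ^ ((p - 1) / 2) = 1 := by
  classical
  have hprime : p.Prime := Fact.out
  have hpodd : p % 2 = 1 := Nat.odd_iff.mp (hprime.odd_of_ne_two hp2)
  haveI : Fact (Irreducible π) := ⟨hπ⟩
  have hπ0 : π ≠ 0 := hπ.ne_zero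
  set m := π.natDegree with hm
  letI pb := AdjoinRoot.powerBasis hπ0
  haveI : Module.Finite (ZMod p) (AdjoinRoot π) := pb.finite
  haveI : FiniteDimensional (ZMod p) (AdjoinRoot π) := inferInstance
  haveI : Finite (AdjoinRoot π) := Module.finite_of_finite (ZMod p)
  haveI : Fintype (AdjoinRoot π) := Fintype.ofFinite _
  haveI : CharP (AdjoinRoot π) p :=
    charP_of_injective_algebraMap (algebraMap (ZMod p) (AdjoinRoot π)).injective p
  have hchar : ringChar (AdjoinRoot π) = p := ringChar.eq _ p
  have hchar2 : ringChar (AdjoinRoot π) ≠ 2 := by rw [hchar]; exact hp2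
  have hcard : Fintype.card (AdjoinRoot π) = p ^ m := by
    have h0 : Fintype.card (AdjoinRoot π) =
        Fintype.card (ZMod p) ^ Module.finrank (ZMod p) (AdjoinRoot π) := Module.card_eq_pow_finrank
    rw [h0, ZMod.card, pb.finrank, AdjoinRoot.powerBasis_dim]
  set x : AdjoinRoot π := AdjoinRoot.mk π a with hx
  have hx0 : x ≠ 0 := by rw [hx, Ne, AdjoinRoot.mk_eq_zero]; exact ha
  letI ι : AdjoinRoot π →ₐ[ZMod p] Ω := IsAlgClosed.lift
  have hιinj : Function.Injective ι := ι.toRingHom.injective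
  set β : Ω := ι (AdjoinRoot.root π) with hβ
  have hβroot : eval β (π.map (ψ)) = 0 := by
    have h1 : (aeval (AdjoinRoot.root π)) π = 0 := by
      rw [AdjoinRoot.aeval_eq, AdjoinRoot.mk_self]
    have h2 : (aeval β) π = 0 := by
      rw [hβ, Polynomial.aeval_algHom_apply, h1, map_zero]
    rwa [aeval_def, ← eval_map] at h2
  have hβm : β ^ p ^ m = β := by
    rw [hβ, ← map_pow]
    congr 1
    have := FiniteField.pow_card (AdjoinRoot.root π)
    rwa [hcard] at this
  have hιx : ι x = eval β (a.map (ψ)) := by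
    rw [hx, ← AdjoinRoot.aeval_eq, ← Polynomial.aeval_algHom_apply, ← hβ, aeval_def, ← eval_map]
  set S : ℕ := ∑ j ∈ Finset.range m, p ^ j with hS
  have hprod : ((π.aroots Ω).map (fun y => eval y (a.map (ψ)))).prod = (ι x) ^ S := by
    rw [FFQR.aroots_eq_orbit hπm hπ hβroot hβm, Multiset.map_map]
    have h1 : ∀ j ∈ Multiset.range m,
        ((fun y => eval y (a.map (ψ))) ∘ fun j => β ^ p ^ j) j = (ι x) ^ p ^ j := by
      intro j _
      simp only [Function.comp_apply]
      rw [FFQR.eval_map_pow_iter, hιx]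
    rw [Multiset.map_congr rfl h1]
    have : (Multiset.map (fun j => (ι x) ^ p ^ j) (Multiset.range m)).prod
        = ∏ j ∈ Finset.range m, (ι x) ^ p ^ j := rfl
    rw [this, Finset.prod_pow_eq_pow_sum]
  rw [FiniteField.isSquare_iff hchar2 hx0, hcard, FFQR.half_pow p m hpodd hprime.one_le, ← hS,
    hprod, ← pow_mul]
  rw [show (ι x) ^ (S * ((p - 1) / 2)) = ι (x ^ (S * ((p - 1) / 2))) from (map_pow ι x _).symm,
    show (1 : Ω) = ι 1 from (map_one ι).symm]
  exact (hιinj.eq_iff).symm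

/-! ### Symmetry of the root products -/

lemma FFQR.prod_sym {π D : Polynomial (ZMod p)} (hπm : π.Monic) (hD' : (-D).Monic)
    (hn : Odd D.natDegree) :
    ((π.aroots Ω).map (fun y => eval y (D.map (ψ)))).prod
      = (((-D).aroots Ω).map (fun y => eval y (π.map (ψ)))).prod := by
  classical
  set Rπ : Multiset Ω := π.aroots Ω with hRπ
  set RD : Multiset Ω := (-D).aroots Ω with hRD
  have hπΩm : (π.map ψ).Monic := hπm.map ψ
  have hDΩm : ((-D).map ψ).Monic := hD'.map ψ
  have hπsplit : π.map ψ = (Rπ.map (fun a => X - C a)).prod :=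
    (IsAlgClosed.splits (π.map ψ)).eq_prod_roots_of_monic hπΩm
  have hDsplit : (-D).map ψ = (RD.map (fun a => X - C a)).prod :=
    (IsAlgClosed.splits ((-D).map ψ)).eq_prod_roots_of_monic hDΩm
  have hcardπ : Multiset.card Rπ = π.natDegree := by
    have := (splits_iff_card_roots (f := π.map ψ)).mp
      (IsAlgClosed.splits (π.map ψ))
    rwa [natDegree_map] at this
  have hcardD : Multiset.card RD = D.natDegree := by
    have := (splits_iff_card_roots (f := (-D).map ψ)).mp
      (IsAlgClosed.splits ((-D).map ψ))
    rwa [natDegree_map, natDegree_neg] at this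
  have hDmapneg : D.map ψ = -((-D).map ψ) := by rw [Polynomial.map_neg, neg_neg]
  have hevalD : ∀ y : Ω, eval y (D.map ψ) = - (RD.map (fun b => y - b)).prod := by
    intro y
    rw [hDmapneg, eval_neg, hDsplit, eval_multiset_prod, Multiset.map_map]
    congr 2
    apply Multiset.map_congr rfl
    intro b _
    simp
  have hevalπ : ∀ y : Ω, eval y (π.map ψ) = (Rπ.map (fun a => y - a)).prod := by
    intro y
    rw [hπsplit, eval_multiset_prod, Multiset.map_map]
    apply congrArg
    apply Multiset.map_congr rfl
    intro a _
    simp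
  have hLHS : ((π.aroots Ω).map (fun y => eval y (D.map (ψ)))).prod
      = (-1) ^ π.natDegree * (Rπ.map (fun a => (RD.map (fun b => a - b)).prod)).prod := by
    rw [← hRπ, Multiset.map_congr rfl (fun y _ => hevalD y)]
    rw [show Rπ.map (fun y => -(RD.map (fun b => y - b)).prod)
        = (Rπ.map (fun y => (RD.map (fun b => y - b)).prod)).map Neg.neg by
      rw [Multiset.map_map]; rfl]
    rw [Multiset.prod_map_neg, Multiset.card_map, hcardπ]
  have hRHS : (((-D).aroots Ω).map (fun y => eval y (π.map (ψ)))).prod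
      = ((-1) ^ π.natDegree) ^ D.natDegree
          * (RD.map (fun b => (Rπ.map (fun a => a - b)).prod)).prod := by
    rw [← hRD, Multiset.map_congr rfl (fun y _ => hevalπ y)]
    have h1 : ∀ b : Ω, (Rπ.map (fun a => b - a)).prod
        = (-1) ^ π.natDegree * (Rπ.map (fun a => a - b)).prod := by
      intro b
      rw [show Rπ.map (fun a => b - a) = (Rπ.map (fun a => a - b)).map Neg.neg by
        rw [Multiset.map_map]
        apply Multiset.map_congr rfl
        intro a _
        simp]
      rw [Multiset.prod_map_neg, Multiset.card_map, hcardπ]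
    rw [Multiset.map_congr rfl (fun b _ => h1 b), Multiset.prod_map_mul]
    congr 1
    rw [Multiset.map_const', Multiset.prod_replicate, hcardD]
  rw [hLHS, hRHS, Multiset.prod_map_prod_map]
  congr 1
  rcases Nat.even_or_odd π.natDegree with he | ho
  · rw [he.neg_one_pow, one_pow]
  · rw [ho.neg_one_pow, hn.neg_one_pow]

/-! ### Squares in finite fields: multiplicativity and nonsquare constants -/

lemma FFQR.isSquare_mul_iff_ff {F : Type*} [Field F] [Fintype F] (hF : ringChar F ≠ 2)
    {x y : F} (hx : x ≠ 0) (hy : y ≠ 0) :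
    IsSquare (x * y) ↔ (IsSquare x ↔ IsSquare y) := by
  have hne : (1 : F) ≠ -1 := by
    intro h
    exact (Ring.neg_one_ne_one_of_char_ne_two hF) h.symm
  rw [FiniteField.isSquare_iff hF (mul_ne_zero hx hy), FiniteField.isSquare_iff hF hx,
    FiniteField.isSquare_iff hF hy, mul_pow]
  rcases FiniteField.pow_dichotomy hF hx with h | h <;>
    rcases FiniteField.pow_dichotomy hF hy with h' | h' <;>
      rw [h, h'] <;>
    simp only [mul_one, mul_neg, one_mul, neg_neg] <;>
    constructor <;> intro hh <;> first
      | rfl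
      | (exact absurd hh.symm hne)
      | (exact iff_of_true rfl rfl)
      | (exact absurd (hh.mp rfl).symm hne)
      | (exact absurd (hh.mpr rfl).symm hne)
      | (exact iff_of_false (fun hc => hne hc.symm) (fun hc => hne hc.symm))
      | (exact hh.mp trivial)
      | (exact hh.mpr trivial)

lemma FFQR.not_isSquare_mk_C (hp2 : p ≠ 2) {f : Polynomial (ZMod p)} (hf : Irreducible f)
    (hodd : Odd f.natDegree) {α : ZMod p} (hα0 : α ≠ 0) (hα : ¬ IsSquare α) :
    ¬ IsSquare (AdjoinRoot.mk f (C α)) := by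
  classical
  have hprime : p.Prime := Fact.out
  have hpodd : p % 2 = 1 := Nat.odd_iff.mp (hprime.odd_of_ne_two hp2)
  haveI : Fact (Irreducible f) := ⟨hf⟩
  have hf0 : f ≠ 0 := hf.ne_zero
  set n := f.natDegree with hn
  letI pb := AdjoinRoot.powerBasis hf0
  haveI : Module.Finite (ZMod p) (AdjoinRoot f) := pb.finite
  haveI : Finite (AdjoinRoot f) := Module.finite_of_finite (ZMod p)
  haveI : Fintype (AdjoinRoot f) := Fintype.ofFinite _
  haveI : CharP (AdjoinRoot f) p :=
    charP_of_injective_algebraMap (algebraMap (ZMod p) (AdjoinRoot f)).injective p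
  have hchar : ringChar (AdjoinRoot f) = p := ringChar.eq _ p
  have hchar2 : ringChar (AdjoinRoot f) ≠ 2 := by rw [hchar]; exact hp2
  have hcard : Fintype.card (AdjoinRoot f) = p ^ n := by
    have h0 : Fintype.card (AdjoinRoot f) =
        Fintype.card (ZMod p) ^ Module.finrank (ZMod p) (AdjoinRoot f) := Module.card_eq_pow_finrank
    rw [h0, ZMod.card, pb.finrank, AdjoinRoot.powerBasis_dim]
  set x : AdjoinRoot f := AdjoinRoot.mk f (C α) with hx
  have hxalg : x = algebraMap (ZMod p) (AdjoinRoot f) α := by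
    rw [hx, AdjoinRoot.algebraMap_eq, AdjoinRoot.mk_C]
  have hx0 : x ≠ 0 := by
    rw [hxalg]
    intro hc
    exact hα0 ((algebraMap (ZMod p) (AdjoinRoot f)).injective (by rw [hc, map_zero]))
  have hzchar : ringChar (ZMod p) ≠ 2 := by
    rw [ZMod.ringChar_zmod_n]; exact hp2
  have hαpow : α ^ (p / 2) = -1 := by
    rcases FiniteField.pow_dichotomy hzchar hα0 with h | h
    · exact absurd ((FiniteField.isSquare_iff hzchar hα0).mpr h) hα
    · rwa [ZMod.card] at h
  have hp2' : p / 2 = (p - 1) / 2 := by omega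
  set S : ℕ := ∑ j ∈ Finset.range n, p ^ j with hS
  have hSodd : S % 2 = 1 := by
    rw [hS, FFQR.geom_parity p hpodd n]
    exact Nat.odd_iff.mp hodd
  intro hsq
  have := (FiniteField.isSquare_iff hchar2 hx0).mp hsq
  rw [hcard, FFQR.half_pow p n hpodd hprime.one_le, ← hS, hxalg, ← map_pow, pow_mul'] at this
  rw [hp2'.symm, hαpow] at this
  have hneg : ((-1 : ZMod p)) ^ S = -1 := Odd.neg_one_pow (Nat.odd_iff.mpr hSodd)
  rw [hneg] at this
  have : (algebraMap (ZMod p) (AdjoinRoot f)) (-1) = algebraMap (ZMod p) (AdjoinRoot f) 1 := by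
    rw [this, map_one]
  have h2 : (-1 : ZMod p) = 1 := (algebraMap (ZMod p) (AdjoinRoot f)).injective this
  exact Ring.neg_one_ne_one_of_char_ne_two hzchar h2

/-! ### Basic properties of `polyLegendreSym` -/

lemma FFQR.polyLegendreSym_eq_one_iff (a f : Polynomial (ZMod p)) :
    polyLegendreSym a f = 1 ↔ IsSquare (AdjoinRoot.mk f a) := by
  unfold polyLegendreSym
  split_ifs with h
  · exact iff_of_true rfl h
  · exact iff_of_false (by norm_num) h

lemma FFQR.polyLegendreSym_vals (a f : Polynomial (ZMod p)) :
    polyLegendreSym a f = 1 ∨ polyLegendreSym a f = -1 := by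
  unfold polyLegendreSym
  split_ifs with h
  · exact Or.inl rfl
  · exact Or.inr rfl

lemma FFQR.polyLegendreSym_span_congr {f g : Polynomial (ZMod p)}
    (h : Ideal.span {f} = Ideal.span {g}) (a : Polynomial (ZMod p)) :
    polyLegendreSym a f = polyLegendreSym a g := by
  unfold polyLegendreSym
  have k : IsSquare (Ideal.Quotient.mk (Ideal.span {f}) a) ↔
      IsSquare (Ideal.Quotient.mk (Ideal.span {g}) a) := by
    have key : ∀ I J : Ideal (Polynomial (ZMod p)), I = J →
        (IsSquare (Ideal.Quotient.mk I a) ↔ IsSquare (Ideal.Quotient.mk J a)) := by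
      intro I J hIJ; subst hIJ; rfl
    exact key _ _ h
  split_ifs with h1 h2 h2
  · rfl
  · exact absurd (k.mp h1) h2
  · exact absurd (k.mpr h2) h1
  · rfl

end Fixed

theorem legendre_symbol_reciprocity_trick (p : ℕ) [Fact p.Prime] (hp : p ≠ 2)
    (α : ZMod p) (hα0 : α ≠ 0) (hα : ¬ IsSquare α)
    (π : Polynomial (ZMod p)) (hπm : π.Monic) (hπ : Irreducible π)
    (δ : ℤ) (hδ : δ = 1 ∨ δ = -1)
    (D : Polynomial (ZMod p)) (hD : Irreducible D) (hDdeg : Odd D.natDegree)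
    (hDlead : D.leadingCoeff = -1)
    (hDπ : (Ideal.span {D} : Ideal (Polynomial (ZMod p))) ≠ Ideal.span {π}) :
    polyLegendreSym (if δ = 1 then π else Polynomial.C α * π) D = 1 ↔ polyLegendreSym D π = δ := by
  classical
  -- the monic associate of D
  set D' : Polynomial (ZMod p) := -D with hD'
  have hD'm : D'.Monic := by
    rw [Monic.def, hD', leadingCoeff_neg, hDlead, neg_neg]
  have hassoc : Associated D D' := ⟨-1, by simp [hD']⟩
  have hD'irr : Irreducible D' := hassoc.irreducible hD
  have hspan : (Ideal.span {D} : Ideal (Polynomial (ZMod p))) = Ideal.span {D'} :=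
    Ideal.span_singleton_eq_span_singleton.mpr hassoc
  have hD'deg : Odd D'.natDegree := by rwa [hD', natDegree_neg]
  have hD'π : (Ideal.span {D'} : Ideal (Polynomial (ZMod p))) ≠ Ideal.span {π} := by
    rw [← hspan]; exact hDπ
  -- non-divisibility facts
  have hnd1 : ¬ D' ∣ π := by
    intro h
    exact hD'π (Ideal.span_singleton_eq_span_singleton.mpr (hD'irr.associated_of_dvd hπ h))
  have hnd2 : ¬ π ∣ D := by
    intro h
    exact hDπ (Ideal.span_singleton_eq_span_singleton.mpr (hπ.associated_of_dvd hD h)).symm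
  have hDdeg1 : 0 < D.natDegree := by
    rcases hDdeg with ⟨k, hk⟩; omega
  have hndC : ¬ D' ∣ C α := by
    intro h
    have hCα : (C α : Polynomial (ZMod p)) ≠ 0 := by
      simp [hα0]
    have := natDegree_le_of_dvd h hCα
    rw [hD', natDegree_neg, natDegree_C] at this
    omega
  -- the two criteria
  have hcritD : polyLegendreSym D π = 1 ↔
      (((π.aroots (AlgebraicClosure (ZMod p))).map
        (fun y => eval y (D.map (algebraMap (ZMod p) _)))).prod) ^ ((p - 1) / 2) = 1 := by
    rw [FFQR.polyLegendreSym_eq_one_iff]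
    exact FFQR.isSquare_mk_iff hp hπm hπ hnd2
  have hcritπ : polyLegendreSym π D = 1 ↔
      (((D'.aroots (AlgebraicClosure (ZMod p))).map
        (fun y => eval y (π.map (algebraMap (ZMod p) _)))).prod) ^ ((p - 1) / 2) = 1 := by
    rw [FFQR.polyLegendreSym_span_congr hspan, FFQR.polyLegendreSym_eq_one_iff]
    exact FFQR.isSquare_mk_iff hp hD'm hD'irr hnd1
  have hsym := FFQR.prod_sym (p := p) hπm (hD' ▸ hD'm) hDdeg
  have hmain : polyLegendreSym π D = 1 ↔ polyLegendreSym D π = 1 := by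
    rw [hcritπ, hcritD, hD', hsym]
  rcases hδ with rfl | rfl
  · rw [if_pos rfl]
    exact hmain
  · rw [if_neg (by decide)]
    -- set up instances on AdjoinRoot D'
    haveI : Fact (Irreducible D') := ⟨hD'irr⟩
    have hD'0 : D' ≠ 0 := hD'irr.ne_zero
    letI pb := AdjoinRoot.powerBasis hD'0
    haveI : Module.Finite (ZMod p) (AdjoinRoot D') := pb.finite
    haveI : Finite (AdjoinRoot D') := Module.finite_of_finite (ZMod p)
    haveI : Fintype (AdjoinRoot D') := Fintype.ofFinite _
    haveI : CharP (AdjoinRoot D') p :=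
      charP_of_injective_algebraMap (algebraMap (ZMod p) (AdjoinRoot D')).injective p
    have hchar : ringChar (AdjoinRoot D') = p := ringChar.eq _ p
    have hchar2 : ringChar (AdjoinRoot D') ≠ 2 := by rw [hchar]; exact hp
    have hmkC0 : AdjoinRoot.mk D' (C α) ≠ 0 := by
      rw [Ne, AdjoinRoot.mk_eq_zero]; exact hndC
    have hmkπ0 : AdjoinRoot.mk D' π ≠ 0 := by
      rw [Ne, AdjoinRoot.mk_eq_zero]; exact hnd1
    have hCns : ¬ IsSquare (AdjoinRoot.mk D' (C α)) :=
      FFQR.not_isSquare_mk_C hp hD'irr hD'deg hα0 hα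
    have hLHS : polyLegendreSym (C α * π) D = 1 ↔ ¬ (polyLegendreSym π D = 1) := by
      rw [FFQR.polyLegendreSym_span_congr hspan, FFQR.polyLegendreSym_eq_one_iff,
        FFQR.polyLegendreSym_span_congr hspan (a := π), FFQR.polyLegendreSym_eq_one_iff,
        map_mul]
      rw [FFQR.isSquare_mul_iff_ff hchar2 hmkC0 hmkπ0]
      constructor
      · intro h hsq
        exact hCns (h.mpr hsq)
      · intro h
        exact iff_of_false hCns h
    rw [hLHS, hmain]
    rcases FFQR.polyLegendreSym_vals (p := p) D π with h | h <;> rw [h] <;> norm_num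
end

section
/- N_{k(θ)/k}(ε₃), the norm of ε₃ from the cubic k-algebra k[x]/(f₃(x)) to k (the determinant of multiplication by ε₃), is a square in k = 𝔽_p(t), and ε₃ is not a square in k[x]/(f₃(x)). -/
/-!
STATEMENT 11: `N_{k(θ)/k}(ε₃)` is a square in `k = 𝔽_p(t)` and `ε₃` is not a square in
`k(θ) = k[x]/(f₃(x))`.
-/

open Polynomial

/-- The cubic factor `f₃` of the characteristic polynomial, over `k = 𝔽_p(t)`. -/
noncomputable def f3 (p : ℕ) [Fact p.Prime] (α : ZMod p) : Polynomial (RatFunc (ZMod p)) :=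
  X ^ 3
    - C (RatFunc.X ^ 3 * (RatFunc.X + 1) * RatFunc.C (3 * α - 1)
          / RatFunc.C (α * (α - 1) ^ 2)) * X ^ 2
    + C (RatFunc.X : RatFunc (ZMod p)) * X
    + C (RatFunc.X ^ 4 * (RatFunc.X + 1) * RatFunc.C (α + 1) / RatFunc.C (α * (α - 1) ^ 2))

/-- `ε₃ = -α(t+1)·θ` in `k(θ) = k[x]/(f₃)`. -/
noncomputable def eps3 (p : ℕ) [Fact p.Prime] (α : ZMod p) : AdjoinRoot (f3 p α) :=
  AdjoinRoot.of (f3 p α) (-(RatFunc.C α) * (RatFunc.X + 1)) * AdjoinRoot.root (f3 p α)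

section Aux

open PowerSeries

variable {K : Type*} [Field K]

lemma aux_smod_ps (n : ℕ) (x y : K⟦X⟧) :
    x ≡ y [SMOD ((Ideal.span {(PowerSeries.X : K⟦X⟧)}) ^ n • ⊤ : Submodule K⟦X⟧ K⟦X⟧)] ↔
      ∀ m < n, PowerSeries.coeff m x = PowerSeries.coeff m y := by
  rw [SModEq.sub_mem, smul_eq_mul, Ideal.mul_top, Ideal.span_singleton_pow,
    Ideal.mem_span_singleton, PowerSeries.X_pow_dvd_iff]
  constructor
  · intro h m hm
    have := h m hm
    rwa [map_sub, sub_eq_zero] at this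
  · intro h m hm
    rw [map_sub, sub_eq_zero]
    exact h m hm

instance aux_psAdicComplete : IsAdicComplete (Ideal.span {(PowerSeries.X : K⟦X⟧)}) K⟦X⟧ where
  haus' := by
    intro x hx
    ext n
    have := (aux_smod_ps (n+1) x 0).mp (hx (n+1)) n (Nat.lt_succ_self n)
    simpa using this
  prec' := by
    intro f hf
    refine ⟨PowerSeries.mk (fun n => PowerSeries.coeff n (f (n+1))), fun n => ?_⟩
    rw [aux_smod_ps]
    intro m hm
    have := (aux_smod_ps (m+1) (f (m+1)) (f n)).mp (hf (Nat.succ_le_of_lt hm)) m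
      (Nat.lt_succ_self m)
    simp [← this]

lemma aux_exists_root_cubic (a b : K) (ha : a ≠ 0) :
    ∃ z : K⟦X⟧, constantCoeff z = -a ∧
      z ^ 3 + (PowerSeries.C a * (1 + PowerSeries.X)⁻¹) * z ^ 2
        - (PowerSeries.X ^ 5 * PowerSeries.C b) * z
        + PowerSeries.X ^ 5 * PowerSeries.C a * (1 + PowerSeries.X)⁻¹ = 0 := by
  set U : K⟦X⟧ := 1 + PowerSeries.X with hUdef
  have hU0 : constantCoeff U = 1 := by simp [hUdef]
  have hU : U * U⁻¹ = 1 := PowerSeries.mul_inv_cancel _ (by rw [hU0]; exact one_ne_zero)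
  set V : K⟦X⟧ := U⁻¹ with hVdef
  have hV0 : constantCoeff V = 1 := by
    rw [hVdef, PowerSeries.constantCoeff_inv, hU0, inv_one]
  set F : Polynomial K⟦X⟧ :=
    Polynomial.X ^ 3 + Polynomial.C (PowerSeries.C a * V) * Polynomial.X ^ 2
      - Polynomial.C (PowerSeries.X ^ 5 * PowerSeries.C b) * Polynomial.X
      + Polynomial.C (PowerSeries.X ^ 5 * PowerSeries.C a * V) with hFdef
  have hmonic : F.Monic := by
    unfold F
    monicity!
  set z₀ : K⟦X⟧ := PowerSeries.C (-a) with hz₀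
  have heval : F.eval z₀ ∈ Ideal.span {(PowerSeries.X : K⟦X⟧)} := by
    rw [Ideal.mem_span_singleton]
    refine ⟨-(PowerSeries.C a)^3 * V
      + PowerSeries.X ^ 4 * (PowerSeries.C (a*b) + PowerSeries.C a * V), ?_⟩
    simp only [hFdef, hz₀, Polynomial.eval_add, Polynomial.eval_sub, Polynomial.eval_mul,
      Polynomial.eval_pow, Polynomial.eval_C, Polynomial.eval_X, map_neg, map_mul]
    linear_combination ((PowerSeries.C a)^3 : K⟦X⟧) * hU
  have hderiv : IsUnit (Ideal.Quotient.mk (Ideal.span {(PowerSeries.X : K⟦X⟧)})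
      (F.derivative.eval z₀)) := by
    apply IsUnit.map
    rw [PowerSeries.isUnit_iff_constantCoeff, isUnit_iff_ne_zero]
    have : F.derivative.eval z₀ = 3 * z₀^2 + 2 * (PowerSeries.C a * V) * z₀
        - PowerSeries.X ^ 5 * PowerSeries.C b := by
      simp only [hFdef]
      simp [Polynomial.derivative_pow]
      ring
    rw [this, hz₀]
    simp only [map_sub, map_add, map_mul, map_pow, map_ofNat, PowerSeries.constantCoeff_C,
      hV0, PowerSeries.constantCoeff_X]
    intro hEq
    exact pow_ne_zero 2 ha (by linear_combination hEq)
  obtain ⟨z, hz1, hz2⟩ := HenselianRing.is_henselian (I := Ideal.span {(PowerSeries.X : K⟦X⟧)})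
    F hmonic z₀ heval hderiv
  refine ⟨z, ?_, ?_⟩
  · rw [Ideal.mem_span_singleton] at hz2
    obtain ⟨c, hc⟩ := hz2
    have := congrArg (PowerSeries.constantCoeff (R := K)) hc
    simp only [map_sub, map_mul, PowerSeries.constantCoeff_X, zero_mul] at this
    rw [hz₀] at this
    simp at this
    linear_combination this
  · have := hz1
    rw [Polynomial.IsRoot, hFdef] at this
    simp only [Polynomial.eval_add, Polynomial.eval_sub, Polynomial.eval_mul,
      Polynomial.eval_pow, Polynomial.eval_C, Polynomial.eval_X] at this
    exact this

lemma aux_val_coe_unit (g : K⟦X⟧) (hg : constantCoeff g ≠ 0) :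
    Valued.v ((g : LaurentSeries K)) = (1 : WithZero (Multiplicative ℤ)) := by
  have h1 : Valued.v ((g : LaurentSeries K)) ≤ 1 :=
    (LaurentSeries.val_le_one_iff_eq_coe K _).mpr ⟨g, rfl⟩
  have h2 : Valued.v ((g⁻¹ : K⟦X⟧) : LaurentSeries K) ≤ 1 :=
    (LaurentSeries.val_le_one_iff_eq_coe K _).mpr ⟨g⁻¹, rfl⟩
  have h3 : (g : LaurentSeries K) * ((g⁻¹ : K⟦X⟧) : LaurentSeries K) = 1 := by
    rw [← PowerSeries.coe_mul, PowerSeries.mul_inv_cancel _ hg, PowerSeries.coe_one]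
  have h4 : Valued.v ((g : LaurentSeries K)) * Valued.v ((g⁻¹ : K⟦X⟧) : LaurentSeries K) = 1 := by
    rw [← Valued.v.map_mul, h3, Valued.v.map_one]
  refine le_antisymm h1 ?_
  calc (1 : WithZero (Multiplicative ℤ))
      = Valued.v ((g : LaurentSeries K)) * Valued.v ((g⁻¹ : K⟦X⟧) : LaurentSeries K) := h4.symm
    _ ≤ Valued.v ((g : LaurentSeries K)) * 1 := mul_le_mul_right h2 _
    _ = Valued.v ((g : LaurentSeries K)) := mul_one _

end Aux

open scoped RatFunc

lemma aux_ratfunc_coe_C {F : Type*} [Field F] (r : F) :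
    ((RatFunc.C r : RatFunc F) : LaurentSeries F) = HahnSeries.C r := by
  rw [← RatFunc.algebraMap_C]
  exact (RatFunc.coe_coe (Polynomial.C r)).symm.trans (by rw [Polynomial.coe_C, PowerSeries.coe_C])

lemma aux_exists_theta (p : ℕ) [Fact p.Prime] (α : ZMod p)
    (hα0 : α ≠ 0) (hα1 : α - 1 ≠ 0) (hα2 : α + 1 ≠ 0) :
    ∃ z : PowerSeries (ZMod p), PowerSeries.constantCoeff z ≠ 0 ∧
      Polynomial.aeval (((PowerSeries.X ^ 3 : PowerSeries (ZMod p)) : LaurentSeries (ZMod p))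
        * ((z : PowerSeries (ZMod p)) : LaurentSeries (ZMod p))⁻¹) (f3 p α) = 0 := by
  set d : ZMod p := α * (α - 1) ^ 2 with hddef
  have hd : d ≠ 0 := mul_ne_zero hα0 (pow_ne_zero 2 hα1)
  obtain ⟨z, hz0, hzrel⟩ := aux_exists_root_cubic (d * (α+1)⁻¹) ((3*α-1) * (α+1)⁻¹)
    (mul_ne_zero hd (inv_ne_zero hα2))
  have hz0' : PowerSeries.constantCoeff z ≠ 0 := by
    rw [hz0]
    exact neg_ne_zero.mpr (mul_ne_zero hd (inv_ne_zero hα2))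
  refine ⟨z, hz0', ?_⟩
  set L := LaurentSeries (ZMod p)
  set x : L := ((PowerSeries.X : PowerSeries (ZMod p)) : L) with hxdef
  set V : L := ((((1 + PowerSeries.X : PowerSeries (ZMod p)))⁻¹ : PowerSeries (ZMod p)) : L)
    with hVdef
  set Z : L := ((z : PowerSeries (ZMod p)) : L) with hZdef
  have hZne : Z ≠ 0 := by
    intro h
    apply hz0'
    have h2 : (HahnSeries.ofPowerSeries ℤ (ZMod p)) z
        = (HahnSeries.ofPowerSeries ℤ (ZMod p)) 0 := by simpa using h
    rw [HahnSeries.ofPowerSeries_injective h2]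
    simp
  have hUV : (1 + x) * V = 1 := by
    rw [hxdef, hVdef, ← PowerSeries.coe_one, ← PowerSeries.coe_add, ← PowerSeries.coe_mul,
      PowerSeries.mul_inv_cancel, PowerSeries.coe_one]
    simp
  have hrelL : Z ^ 3 + (HahnSeries.C (d * (α+1)⁻¹) * V) * Z ^ 2
      - (x ^ 5 * HahnSeries.C ((3*α-1) * (α+1)⁻¹)) * Z
      + x ^ 5 * HahnSeries.C (d * (α+1)⁻¹) * V = 0 := by
    have h3 := congrArg (HahnSeries.ofPowerSeries ℤ (ZMod p)) hzrel
    simpa only [map_add, map_sub, map_mul, map_pow, map_zero, map_one,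
      ← PowerSeries.coe_C, ← PowerSeries.coe_X] using h3
  have hcoe : ∀ r : RatFunc (ZMod p), algebraMap _ L r = (r : L) := fun r => rfl
  have hxX : ((RatFunc.X : RatFunc (ZMod p)) : L) = x := by
    rw [RatFunc.coe_X, hxdef, PowerSeries.coe_X]
  have hexp : ∀ (A B r : RatFunc (ZMod p)) (Θ : L),
      Polynomial.aeval Θ (X^3 - C A*X^2 + C r*X + C B)
        = Θ^3 - (A : L)*Θ^2 + (r : L)*Θ + (B : L) := by
    intro A B r Θ
    simp only [map_add, map_sub, map_mul, map_pow, aeval_X, aeval_C, hcoe]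
  have hA : ((RatFunc.X ^ 3 * (RatFunc.X + 1) * RatFunc.C (3 * α - 1)
      / RatFunc.C (α * (α - 1) ^ 2) : RatFunc (ZMod p)) : L)
      = x ^ 3 * (x + 1) * HahnSeries.C (3 * α - 1) / HahnSeries.C d := by
    simp only [map_div₀, map_mul, map_pow, map_add,
      map_one, RatFunc.coe_X, aux_ratfunc_coe_C, hxdef, PowerSeries.coe_X, hddef]
  have hB : ((RatFunc.X ^ 4 * (RatFunc.X + 1) * RatFunc.C (α + 1)
      / RatFunc.C (α * (α - 1) ^ 2) : RatFunc (ZMod p)) : L)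
      = x ^ 4 * (x + 1) * HahnSeries.C (α + 1) / HahnSeries.C d := by
    simp only [map_div₀, map_mul, map_pow, map_add,
      map_one, RatFunc.coe_X, aux_ratfunc_coe_C, hxdef, PowerSeries.coe_X, hddef]
  have hCdne : (HahnSeries.C d : L) ≠ 0 := by
    simpa using hd
  have hC1 : HahnSeries.C (d * (α+1)⁻¹) * (HahnSeries.C (α+1) : L) = HahnSeries.C d := by
    rw [← map_mul]
    congr 1
    field_simp
  have hC2 : HahnSeries.C ((3*α-1) * (α+1)⁻¹) * (HahnSeries.C (α+1) : L)
      = HahnSeries.C (3*α-1) := by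
    rw [← map_mul]
    congr 1
    field_simp
  rw [show f3 p α = X^3 - C (RatFunc.X ^ 3 * (RatFunc.X + 1) * RatFunc.C (3 * α - 1)
      / RatFunc.C (α * (α - 1) ^ 2))*X^2 + C (RatFunc.X : RatFunc (ZMod p))*X
      + C (RatFunc.X ^ 4 * (RatFunc.X + 1) * RatFunc.C (α + 1)
      / RatFunc.C (α * (α - 1) ^ 2)) from rfl, hexp]
  simp only [hA, hB, hxX, map_pow, ← hxdef, ← hZdef]
  have key : x^9 * HahnSeries.C d - x^9*(x+1)* HahnSeries.C (3*α-1) * Z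
      + x^4 * HahnSeries.C d * Z^2 + x^4*(x+1)* HahnSeries.C (α+1) * Z^3 = 0 := by
    linear_combination (x^4*(x+1)*(HahnSeries.C (α+1) : L)) * hrelL
      + (x^9*(x+1)*Z) * hC2
      - (x^4*(x+1)*V*Z^2 + x^9*(x+1)*V) * hC1
      - ((HahnSeries.C d : L)*x^4*Z^2 + (HahnSeries.C d : L)*x^9) * hUV
  have hZi : Z * Z⁻¹ = 1 := mul_inv_cancel₀ hZne
  have hCdi : (HahnSeries.C d : L) * (HahnSeries.C d : L)⁻¹ = 1 := mul_inv_cancel₀ hCdne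
  rw [div_eq_mul_inv, div_eq_mul_inv]
  linear_combination (Z⁻¹^3 * (HahnSeries.C d : L)⁻¹) * key
    - (x^9*Z⁻¹^3 + x^4*Z⁻¹) * hCdi
    - (-(x^9*(x+1)*(HahnSeries.C (3*α-1) : L)*(HahnSeries.C d : L)⁻¹*Z⁻¹^2)
       + x^4*Z⁻¹*(HahnSeries.C d : L)*(HahnSeries.C d : L)⁻¹*(Z*Z⁻¹+1)
       + x^4*(x+1)*(HahnSeries.C (α+1) : L)*(HahnSeries.C d : L)⁻¹*(Z^2*Z⁻¹^2+Z*Z⁻¹+1)) * hZi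

theorem norm_eps3_square_and_eps3_not_square (p : ℕ) [Fact p.Prime] (hp : 3 < p)
    (α : ZMod p) (hα0 : α ≠ 0) (hα1 : ¬ IsSquare α)
    (hα2 : α + 1 ≠ 0) (hα2' : IsSquare (α + 1)) (hα3 : 3 * α - 1 ≠ 0) :
    IsSquare (Algebra.norm (RatFunc (ZMod p)) (eps3 p α)) ∧ ¬ IsSquare (eps3 p α) := by
  have hα1' : α - 1 ≠ 0 := by
    intro h
    exact hα1 ⟨1, by linear_combination h⟩
  constructor
  · obtain ⟨β, hβ⟩ := hα2'
    have hmonic : (f3 p α).Monic := by unfold f3; monicity!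
    have hne : f3 p α ≠ 0 := hmonic.ne_zero
    have hdeg : (f3 p α).natDegree = 3 := by unfold f3; compute_degree!
    have hmin : minpoly (RatFunc (ZMod p)) (AdjoinRoot.root (f3 p α)) = f3 p α := by
      rw [AdjoinRoot.minpoly_root hne, hmonic.leadingCoeff, inv_one, map_one, mul_one]
    have hfinrank : Module.finrank (RatFunc (ZMod p)) (AdjoinRoot (f3 p α)) = 3 := by
      rw [(AdjoinRoot.powerBasis' hmonic).finrank, AdjoinRoot.powerBasis'_dim, hdeg]
    have hnormroot : Algebra.norm (RatFunc (ZMod p)) (AdjoinRoot.root (f3 p α))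
        = (-1)^3 * ((f3 p α).coeff 0) := by
      have h := Algebra.PowerBasis.norm_gen_eq_coeff_zero_minpoly
        (AdjoinRoot.powerBasis' hmonic)
      simpa only [AdjoinRoot.powerBasis'_gen, AdjoinRoot.powerBasis'_dim, hdeg, hmin] using h
    have hcoeff : (f3 p α).coeff 0
        = RatFunc.X ^ 4 * (RatFunc.X + 1) * RatFunc.C (α + 1)
          / RatFunc.C (α * (α - 1) ^ 2) := by
      simp [f3, coeff_zero_eq_eval_zero]
    have hnorm : Algebra.norm (RatFunc (ZMod p)) (eps3 p α)
        = (-(RatFunc.C α) * (RatFunc.X + 1))^3 * ((-1)^3 * ((f3 p α).coeff 0)) := by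
      rw [eps3, map_mul, ← hnormroot]
      congr 1
      rw [show AdjoinRoot.of (f3 p α) (-(RatFunc.C α) * (RatFunc.X + 1))
          = algebraMap _ _ (-(RatFunc.C α) * (RatFunc.X + 1)) from rfl,
        Algebra.norm_algebraMap, hfinrank]
    have hCα : (RatFunc.C α : RatFunc (ZMod p)) ≠ 0 := by
      intro h
      exact hα0 (RatFunc.C.injective (by rw [h, map_zero]))
    have hCα1 : (RatFunc.C (α - 1) : RatFunc (ZMod p)) ≠ 0 := by
      intro h
      exact hα1' (RatFunc.C.injective (by rw [h, map_zero]))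
    rw [hnorm, hcoeff]
    refine ⟨RatFunc.C (α*β) * RatFunc.X^2 * (RatFunc.X+1)^2 / RatFunc.C (α-1), ?_⟩
    rw [show (RatFunc.C (α*(α-1)^2) : RatFunc (ZMod p))
        = RatFunc.C α * RatFunc.C (α-1)^2 from by rw [map_mul, map_pow],
      show (RatFunc.C (α+1) : RatFunc (ZMod p)) = RatFunc.C β * RatFunc.C β from by
        rw [← map_mul, ← hβ],
      show (RatFunc.C (α*β) : RatFunc (ZMod p)) = RatFunc.C α * RatFunc.C β from map_mul _ _ _]
    have hD : (RatFunc.C α * RatFunc.C (α - 1) ^ 2 : RatFunc (ZMod p)) ≠ 0 :=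
      mul_ne_zero hCα (pow_ne_zero _ hCα1)
    have hiD : (RatFunc.C α * RatFunc.C (α - 1) ^ 2 : RatFunc (ZMod p))
        * (RatFunc.C α * RatFunc.C (α - 1) ^ 2)⁻¹ = 1 := mul_inv_cancel₀ hD
    have hiC : (RatFunc.C (α - 1) : RatFunc (ZMod p)) * (RatFunc.C (α - 1))⁻¹ = 1 :=
      mul_inv_cancel₀ hCα1
    rw [div_eq_mul_inv, div_eq_mul_inv]
    linear_combination
      (RatFunc.C α^2 * RatFunc.C β^2 * RatFunc.X^4 * (RatFunc.X+1)^4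
        * ((RatFunc.C (α-1) : RatFunc (ZMod p))⁻¹)^2) * hiD
      - (RatFunc.C α^2 * RatFunc.C β^2 * RatFunc.X^4 * (RatFunc.X+1)^4 * RatFunc.C α
          * (RatFunc.C α * RatFunc.C (α - 1) ^ 2)⁻¹
          * (RatFunc.C (α-1) * (RatFunc.C (α-1))⁻¹ + 1)) * hiC
  · -- eps3 is not a square
    obtain ⟨z, hz0, haev⟩ := aux_exists_theta p α hα0 hα1' hα2
    set L := LaurentSeries (ZMod p)
    set Θ : L := (((PowerSeries.X ^ 3 : PowerSeries (ZMod p)) : L)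
      * ((z : PowerSeries (ZMod p)) : L)⁻¹) with hΘdef
    set φ : AdjoinRoot (f3 p α) →ₐ[RatFunc (ZMod p)] L :=
      AdjoinRoot.liftAlgHom (f3 p α) (Algebra.ofId _ _) Θ
        (show Polynomial.eval₂ (Algebra.ofId (RatFunc (ZMod p)) L : RatFunc (ZMod p) →+* L) Θ
          (f3 p α) = 0 from haev) with hφdef
    have hφeps : φ (eps3 p α)
        = ((-(RatFunc.C α) * (RatFunc.X + 1) : RatFunc (ZMod p)) : L) * Θ := by
      rw [eps3, map_mul, hφdef, AdjoinRoot.liftAlgHom_root]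
      congr 1
      exact AdjoinRoot.liftAlgHom_of _ _ _ _ _
    have hw : ((-(RatFunc.C α) * (RatFunc.X + 1) : RatFunc (ZMod p)) : L)
        = (((-(PowerSeries.C α) * (1 + PowerSeries.X) : PowerSeries (ZMod p))) : L) := by
      rw [PowerSeries.coe_mul, PowerSeries.coe_add, PowerSeries.coe_one, PowerSeries.coe_neg,
        PowerSeries.coe_C, PowerSeries.coe_X,
        map_mul, map_add, map_one, map_neg, aux_ratfunc_coe_C,
        RatFunc.coe_X]
      ring
    have hval : Valued.v (φ (eps3 p α))
        = ((Multiplicative.ofAdd (-3 : ℤ) : Multiplicative ℤ) : WithZero (Multiplicative ℤ)) := by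
      rw [hφeps, hw, hΘdef]
      rw [Valued.v.map_mul, Valued.v.map_mul, map_inv₀]
      rw [aux_val_coe_unit _ (by simp [hα0] : PowerSeries.constantCoeff
        (-(PowerSeries.C α) * (1 + PowerSeries.X)) ≠ 0)]
      rw [aux_val_coe_unit _ hz0]
      rw [PowerSeries.coe_pow, LaurentSeries.valuation_X_pow]
      norm_num
      rfl
    intro hsq
    obtain ⟨r, hr⟩ := hsq
    have h2 : Valued.v (φ r) * Valued.v (φ r)
        = ((Multiplicative.ofAdd (-3 : ℤ) : Multiplicative ℤ) : WithZero (Multiplicative ℤ)) := by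
      rw [← Valued.v.map_mul, ← map_mul, ← hr, hval]
    rcases eq_or_ne (Valued.v (φ r)) 0 with h0 | h0
    · rw [h0, mul_zero] at h2
      exact WithZero.zero_ne_coe h2
    · obtain ⟨m, hm⟩ := WithZero.ne_zero_iff_exists.mp h0
      rw [← hm, ← WithZero.coe_mul] at h2
      have h3 : m * m = Multiplicative.ofAdd (-3 : ℤ) := WithZero.coe_inj.mp h2
      have h4 := congrArg Multiplicative.toAdd h3
      simp only [toAdd_mul, toAdd_ofAdd] at h4
      omega
end
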